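/- arXiv:2405.12025 — 4 statements merged into one kernel-verified Lean document; each statement's English description precedes it below -/
import Mathlib

section
/- Let D be an S_{3,1}-free oriented graph and v a vertex of D such that at least three in-neighbors of v have in-degree at least 3. Then exactly three in-neighbors of v have in-degree 3, no in-neighbor of v has in-degree greater than 3, at most one in-neighbor of v has in-degree 1, and every other in-neighbor of v has in-degree 0; that is, the multiset of in-degrees of the in-neighbors of v is either {3,3,3,1,0,…,0} or {3,3,3,0,…,0}. -/
/-- An oriented graph on `V`: an arc relation in which no two vertices are
joined by arcs in both directions (in particular it is irreflexive). -/
def IsOriented {V : Type*} (A : V → V → Prop) : Prop :=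
  ∀ u v : V, A u v → ¬ A v u

/-- The in-degree of `v`: the number of in-neighbours of `v`. -/
noncomputable def inDeg {V : Type*} (A : V → V → Prop) (v : V) : ℕ :=
  {u : V | A u v}.ncard

/-- The number of arcs of the digraph. -/
noncomputable def arcCount {V : Type*} (A : V → V → Prop) : ℕ :=
  {p : V × V | A p.1 p.2}.ncard

/-- A copy of `S_{k,1}` (the 1-subdivision of the in-star of order `k+1`)
centered at `v`: pairwise distinct vertices `v, u 0, …, u (k-1), w 0, …, w (k-1)`
with arcs `w i → u i` and `u i → v`. -/
def HasSCopyAt {V : Type*} (A : V → V → Prop) (k : ℕ) (v : V) : Prop :=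
  ∃ u w : Fin k → V,
    Function.Injective u ∧ Function.Injective w ∧
    (∀ i j : Fin k, u i ≠ w j) ∧
    (∀ i : Fin k, u i ≠ v) ∧ (∀ i : Fin k, w i ≠ v) ∧
    (∀ i : Fin k, A (w i) (u i)) ∧ (∀ i : Fin k, A (u i) v)

/-- `A` is `S_{k,1}`-free: no copy of `S_{k,1}` with any center. -/
def SFree {V : Type*} (A : V → V → Prop) (k : ℕ) : Prop :=
  ∀ v : V, ¬ HasSCopyAt A k v

lemma copy_of {V : Type*} {A : V → V → Prop} (hori : IsOriented A) {v p q r wp wq wr : V}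
    (hp : A p v) (hq : A q v) (hr : A r v)
    (hwp : A wp p) (hwq : A wq q) (hwr : A wr r)
    (hpq : p ≠ q) (hpr : p ≠ r) (hqr : q ≠ r)
    (hw12 : wp ≠ wq) (hw13 : wp ≠ wr) (hw23 : wq ≠ wr)
    (h1 : wp ≠ q) (h2 : wp ≠ r) (h3 : wq ≠ p) (h4 : wq ≠ r)
    (h5 : wr ≠ p) (h6 : wr ≠ q) : HasSCopyAt A 3 v := by
  have irr : ∀ z : V, ¬ A z z := fun z h => hori z z h h
  have hwpp : wp ≠ p := fun h => irr p (h ▸ hwp)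
  have hwqq : wq ≠ q := fun h => irr q (h ▸ hwq)
  have hwrr : wr ≠ r := fun h => irr r (h ▸ hwr)
  have hpv : p ≠ v := fun h => irr v (h ▸ hp)
  have hqv : q ≠ v := fun h => irr v (h ▸ hq)
  have hrv : r ≠ v := fun h => irr v (h ▸ hr)
  have hwpv : wp ≠ v := fun h => hori p v hp (h ▸ hwp)
  have hwqv : wq ≠ v := fun h => hori q v hq (h ▸ hwq)
  have hwrv : wr ≠ v := fun h => hori r v hr (h ▸ hwr)
  refine ⟨![p, q, r], ![wp, wq, wr], ?_, ?_, ?_, ?_, ?_, ?_, ?_⟩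
  · intro i j hij; fin_cases i <;> fin_cases j <;> simp_all
  · intro i j hij; fin_cases i <;> fin_cases j <;> simp_all
  · intro i j; fin_cases i <;> fin_cases j <;>
      simp_all [ne_comm]
  · intro i; fin_cases i <;> simp_all
  · intro i; fin_cases i <;> simp_all
  · intro i; fin_cases i <;> simp_all
  · intro i; fin_cases i <;> simp_all

lemma three_elems {V : Type*} {A : V → V → Prop} {a : V} (h : 3 ≤ inDeg A a) :
    ∃ e1 e2 e3 : V, e1 ≠ e2 ∧ e1 ≠ e3 ∧ e2 ≠ e3 ∧ A e1 a ∧ A e2 a ∧ A e3 a := by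
  obtain ⟨t, hts, htc⟩ := Set.exists_subset_card_eq h
  rw [Set.ncard_eq_three] at htc
  obtain ⟨x, y, z, hxy, hxz, hyz, rfl⟩ := htc
  exact ⟨x, y, z, hxy, hxz, hyz, hts (by simp), hts (by simp), hts (by simp)⟩

lemma pick_avoid2 {V : Type*} {e1 e2 e3 b c : V} (h12 : e1 ≠ e2) (h13 : e1 ≠ e3)
    (h23 : e2 ≠ e3) :
    ∃ i, (i = e1 ∨ i = e2 ∨ i = e3) ∧ i ≠ b ∧ i ≠ c := by
  by_cases k1 : e1 ≠ b ∧ e1 ≠ c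
  · exact ⟨e1, Or.inl rfl, k1.1, k1.2⟩
  by_cases k2 : e2 ≠ b ∧ e2 ≠ c
  · exact ⟨e2, Or.inr (Or.inl rfl), k2.1, k2.2⟩
  rw [not_and_or, not_not] at k1 k2
  refine ⟨e3, Or.inr (Or.inr rfl), ?_, ?_⟩ <;> intro h3 <;>
    rcases k1 with k1 | k1 <;> rcases k2 with k2 | k2 <;> subst_vars <;> simp_all

lemma pick2_avoid1 {V : Type*} {e1 e2 e3 c : V} (h12 : e1 ≠ e2) (h13 : e1 ≠ e3)
    (h23 : e2 ≠ e3) :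
    ∃ i j, i ≠ j ∧ (i = e1 ∨ i = e2 ∨ i = e3) ∧ (j = e1 ∨ j = e2 ∨ j = e3) ∧
      i ≠ c ∧ j ≠ c := by
  by_cases k1 : e1 = c
  · exact ⟨e2, e3, h23, Or.inr (Or.inl rfl), Or.inr (Or.inr rfl),
      fun h => h12 (k1 ▸ h ▸ rfl), fun h => h13 (k1 ▸ h ▸ rfl)⟩
  by_cases k2 : e2 = c
  · exact ⟨e1, e3, h13, Or.inl rfl, Or.inr (Or.inr rfl), k1,
      fun h => h23 (k2 ▸ h ▸ rfl)⟩
  exact ⟨e1, e2, h12, Or.inl rfl, Or.inr (Or.inl rfl), k1, k2⟩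

lemma not_double_aux {V : Type*} {A : V → V → Prop} (hori : IsOriented A)
    (hfree : SFree A 3) {v a b c : V}
    (hab : a ≠ b) (hac : a ≠ c) (hbc : b ≠ c)
    (hav : A a v) (hbv : A b v) (hcv : A c v)
    (hda : 3 ≤ inDeg A a) (hdb : 3 ≤ inDeg A b) (hdc : 3 ≤ inDeg A c)
    (hba : A b a) (hca : A c a) (hncb : ¬ A c b) : False := by
  have irr : ∀ z : V, ¬ A z z := fun z h => hori z z h h
  -- pick wa ∈ N⁻(a) \ {b,c}
  obtain ⟨e1, e2, e3, h12, h13, h23, he1, he2, he3⟩ := three_elems hda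
  obtain ⟨wa, hwa_mem, hwab, hwac⟩ := pick_avoid2 (b := b) (c := c) h12 h13 h23
  have hwaa : A wa a := by rcases hwa_mem with rfl | rfl | rfl <;> assumption
  -- pick wc ∈ N⁻(c) \ {b, wa} ; note a ∉ N⁻(c)
  obtain ⟨f1, f2, f3, g12, g13, g23, hf1, hf2, hf3⟩ := three_elems hdc
  obtain ⟨wc, hwc_mem, hwcb, hwcwa⟩ := pick_avoid2 (b := b) (c := wa) g12 g13 g23
  have hwcc : A wc c := by rcases hwc_mem with rfl | rfl | rfl <;> assumption
  have hwca : wc ≠ a := fun h => hori c a hca (h ▸ hwcc)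
  -- pick wb ∈ N⁻(b) \ {wa, wc} ; note a, c ∉ N⁻(b)
  obtain ⟨g1, g2, g3, k12, k13, k23, hg1, hg2, hg3⟩ := three_elems hdb
  obtain ⟨wb, hwb_mem, hwbwa, hwbwc⟩ := pick_avoid2 (b := wa) (c := wc) k12 k13 k23
  have hwbb : A wb b := by rcases hwb_mem with rfl | rfl | rfl <;> assumption
  have hwba : wb ≠ a := fun h => hori b a hba (h ▸ hwbb)
  have hwbc : wb ≠ c := fun h => hncb (h ▸ hwbb)
  exact hfree v (copy_of hori hav hbv hcv hwaa hwbb hwcc hab hac hbc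
    (Ne.symm hwbwa) hwcwa.symm hwbwc hwab hwac hwba hwbc hwca hwcb)

lemma not_double {V : Type*} {A : V → V → Prop} (hori : IsOriented A)
    (hfree : SFree A 3) {v a b c : V}
    (hab : a ≠ b) (hac : a ≠ c) (hbc : b ≠ c)
    (hav : A a v) (hbv : A b v) (hcv : A c v)
    (hda : 3 ≤ inDeg A a) (hdb : 3 ≤ inDeg A b) (hdc : 3 ≤ inDeg A c) :
    ¬ (A b a ∧ A c a) := by
  rintro ⟨hba, hca⟩
  by_cases hcb : A c b
  · exact not_double_aux hori hfree hac hab hbc.symm hav hcv hbv hda hdc hdb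
      hca hba (hori c b hcb)
  · exact not_double_aux hori hfree hab hac hbc hav hbv hcv hda hdb hdc hba hca hcb

lemma sdr_subsets {V : Type*} {A : V → V → Prop} (hori : IsOriented A)
    (hfree : SFree A 3) {v a b c a1 a2 b1 b2 c1 c2 : V}
    (hab : a ≠ b) (hac : a ≠ c) (hbc : b ≠ c)
    (hav : A a v) (hbv : A b v) (hcv : A c v)
    (ha1 : A a1 a) (ha2 : A a2 a) (ha12 : a1 ≠ a2)
    (ha1b : a1 ≠ b) (ha1c : a1 ≠ c) (ha2b : a2 ≠ b) (ha2c : a2 ≠ c)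
    (hb1 : A b1 b) (hb2 : A b2 b) (hb12 : b1 ≠ b2)
    (hb1a : b1 ≠ a) (hb1c : b1 ≠ c) (hb2a : b2 ≠ a) (hb2c : b2 ≠ c)
    (hc1 : A c1 c) (hc2 : A c2 c) (hc12 : c1 ≠ c2)
    (hc1a : c1 ≠ a) (hc1b : c1 ≠ b) (hc2a : c2 ≠ a) (hc2b : c2 ≠ b) :
    A a1 b ∧ A a1 c ∧ A a2 b ∧ A a2 c ∧
    (∀ w, A w a → w ≠ b → w ≠ c → w = a1 ∨ w = a2) ∧
    (∀ w, A w b → w ≠ a → w ≠ c → w = a1 ∨ w = a2) ∧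
    (∀ w, A w c → w ≠ a → w ≠ b → w = a1 ∨ w = a2) := by
  have irr : ∀ z : V, ¬ A z z := fun z h => hori z z h h
  have ha1a : a1 ≠ a := fun h => irr a (h ▸ ha1)
  have ha2a : a2 ≠ a := fun h => irr a (h ▸ ha2)
  have step1 : ∀ z, A z c → z ≠ a → z ≠ b → z = a1 ∨ z = a2 := by
    intro z hz hza hzb
    by_contra hcon
    push_neg at hcon
    obtain ⟨hz1, hz2⟩ := hcon
    obtain ⟨β, hβb, hβz, hβa, hβc⟩ : ∃ β, A β b ∧ β ≠ z ∧ β ≠ a ∧ β ≠ c := by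
      by_cases h : b1 = z
      · exact ⟨b2, hb2, fun hh => hb12 (h.trans hh.symm), hb2a, hb2c⟩
      · exact ⟨b1, hb1, h, hb1a, hb1c⟩
    have k1 : a1 = z ∨ a1 = β := by
      by_contra k
      push_neg at k
      exact hfree v (copy_of hori hav hbv hcv ha1 hβb hz hab hac hbc
        k.2 k.1 hβz ha1b ha1c hβa hβc hza hzb)
    have k2 : a2 = z ∨ a2 = β := by
      by_contra k
      push_neg at k
      exact hfree v (copy_of hori hav hbv hcv ha2 hβb hz hab hac hbc
        k.2 k.1 hβz ha2b ha2c hβa hβc hza hzb)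
    rcases k1 with k1 | k1
    · exact hz1 k1.symm
    rcases k2 with k2 | k2
    · exact hz2 k2.symm
    exact ha12 (k1.trans k2.symm)
  have hc_sub : A a1 c ∧ A a2 c := by
    rcases step1 c1 hc1 hc1a hc1b with h1 | h1 <;>
      rcases step1 c2 hc2 hc2a hc2b with h2 | h2
    · exact absurd (h1.trans h2.symm) hc12
    · exact ⟨h1 ▸ hc1, h2 ▸ hc2⟩
    · exact ⟨h2 ▸ hc2, h1 ▸ hc1⟩
    · exact absurd (h1.trans h2.symm) hc12
  obtain ⟨ha1c', ha2c'⟩ := hc_sub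
  have step2 : ∀ z, A z b → z ≠ a → z ≠ c → z = a1 ∨ z = a2 := by
    intro z hz hza hzc
    by_contra hcon
    push_neg at hcon
    obtain ⟨hz1, hz2⟩ := hcon
    exact hfree v (copy_of hori hav hbv hcv ha1 hz ha2c' hab hac hbc
      (Ne.symm hz1) ha12 hz2 ha1b ha1c hza hzc ha2a ha2b)
  have hb_sub : A a1 b ∧ A a2 b := by
    rcases step2 b1 hb1 hb1a hb1c with h1 | h1 <;>
      rcases step2 b2 hb2 hb2a hb2c with h2 | h2
    · exact absurd (h1.trans h2.symm) hb12
    · exact ⟨h1 ▸ hb1, h2 ▸ hb2⟩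
    · exact ⟨h2 ▸ hb2, h1 ▸ hb1⟩
    · exact absurd (h1.trans h2.symm) hb12
  obtain ⟨ha1b', ha2b'⟩ := hb_sub
  have step3 : ∀ z, A z a → z ≠ b → z ≠ c → z = a1 ∨ z = a2 := by
    intro z hz hzb hzc
    by_contra hcon
    push_neg at hcon
    obtain ⟨hz1, hz2⟩ := hcon
    exact hfree v (copy_of hori hav hbv hcv hz ha1b' ha2c' hab hac hbc
      hz1 hz2 ha12 hzb hzc ha1a ha1c ha2a ha2b)
  exact ⟨ha1b', ha1c', ha2b', ha2c', step3, step2, step1⟩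

lemma not_three_in_pair {V : Type*} {e1 e2 e3 x y : V}
    (h12 : e1 ≠ e2) (h13 : e1 ≠ e3) (h23 : e2 ≠ e3)
    (s1 : e1 = x ∨ e1 = y) (s2 : e2 = x ∨ e2 = y) (s3 : e3 = x ∨ e3 = y) : False := by
  rcases s1 with rfl | rfl <;> rcases s2 with rfl | rfl <;> rcases s3 with rfl | rfl <;>
    simp_all

lemma pick2_pair {V : Type*} {A : V → V → Prop} {a b c : V}
    (hd : 3 ≤ inDeg A a) (nd : ¬ (A b a ∧ A c a)) :
    ∃ i j, i ≠ j ∧ A i a ∧ A j a ∧ i ≠ b ∧ i ≠ c ∧ j ≠ b ∧ j ≠ c := by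
  obtain ⟨e1, e2, e3, h12, h13, h23, he1, he2, he3⟩ := three_elems hd
  rcases not_and_or.mp nd with h | h
  · obtain ⟨i, j, hij, hi, hj, hic, hjc⟩ := pick2_avoid1 (c := c) h12 h13 h23
    have hia : A i a := by rcases hi with rfl | rfl | rfl <;> assumption
    have hja : A j a := by rcases hj with rfl | rfl | rfl <;> assumption
    exact ⟨i, j, hij, hia, hja, fun hh => h (hh ▸ hia), hic,
      fun hh => h (hh ▸ hja), hjc⟩
  · obtain ⟨i, j, hij, hi, hj, hib, hjb⟩ := pick2_avoid1 (c := b) h12 h13 h23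
    have hia : A i a := by rcases hi with rfl | rfl | rfl <;> assumption
    have hja : A j a := by rcases hj with rfl | rfl | rfl <;> assumption
    exact ⟨i, j, hij, hia, hja, hib, fun hh => h (hh ▸ hia),
      hjb, fun hh => h (hh ▸ hja)⟩

lemma one_in {V : Type*} {A : V → V → Prop} {a b c x y : V}
    (hd : 3 ≤ inDeg A a)
    (sub : ∀ w, A w a → w ≠ b → w ≠ c → w = x ∨ w = y) :
    A b a ∨ A c a := by
  by_contra h
  push_neg at h
  obtain ⟨h1, h2⟩ := h
  obtain ⟨e1, e2, e3, h12, h13, h23, he1, he2, he3⟩ := three_elems hd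
  have s1 := sub e1 he1 (fun hh => h1 (hh ▸ he1)) (fun hh => h2 (hh ▸ he1))
  have s2 := sub e2 he2 (fun hh => h1 (hh ▸ he2)) (fun hh => h2 (hh ▸ he2))
  have s3 := sub e3 he3 (fun hh => h1 (hh ▸ he3)) (fun hh => h2 (hh ▸ he3))
  exact not_three_in_pair h12 h13 h23 s1 s2 s3

lemma structure_lemma {V : Type*} {A : V → V → Prop} (hori : IsOriented A)
    (hfree : SFree A 3) {v a b c : V}
    (hab : a ≠ b) (hac : a ≠ c) (hbc : b ≠ c)
    (hav : A a v) (hbv : A b v) (hcv : A c v)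
    (hda : 3 ≤ inDeg A a) (hdb : 3 ≤ inDeg A b) (hdc : 3 ≤ inDeg A c) :
    ∃ p q r x y : V, p ≠ q ∧ p ≠ r ∧ q ≠ r ∧ x ≠ y ∧
      A p v ∧ A q v ∧ A r v ∧
      A x p ∧ A x q ∧ A x r ∧ A y p ∧ A y q ∧ A y r ∧
      A p q ∧ A q r ∧ A r p ∧
      (∀ w, A w p ↔ (w = r ∨ w = x ∨ w = y)) ∧
      (∀ w, A w q ↔ (w = p ∨ w = x ∨ w = y)) ∧
      (∀ w, A w r ↔ (w = q ∨ w = x ∨ w = y)) := by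
  have nd_a : ¬ (A b a ∧ A c a) :=
    not_double hori hfree hab hac hbc hav hbv hcv hda hdb hdc
  have nd_b : ¬ (A a b ∧ A c b) :=
    not_double hori hfree hab.symm hbc hac hbv hav hcv hdb hda hdc
  have nd_c : ¬ (A a c ∧ A b c) :=
    not_double hori hfree hac.symm hbc.symm hab hcv hav hbv hdc hda hdb
  obtain ⟨x, y, hxy, hxa, hya, hxb', hxc', hyb', hyc'⟩ := pick2_pair hda nd_a
  obtain ⟨b1, b2, hb12, hb1, hb2, hb1a, hb1c, hb2a, hb2c⟩ := pick2_pair hdb nd_b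
  obtain ⟨c1, c2, hc12, hc1, hc2, hc1a, hc1b, hc2a, hc2b⟩ := pick2_pair hdc nd_c
  obtain ⟨hxb, hxc, hyb, hyc, sub_a, sub_b, sub_c⟩ :=
    sdr_subsets hori hfree hab hac hbc hav hbv hcv hxa hya hxy hxb' hxc' hyb' hyc'
      hb1 hb2 hb12 hb1a hb1c hb2a hb2c hc1 hc2 hc12 hc1a hc1b hc2a hc2b
  have sub_b' : ∀ w, A w b → w ≠ b → w ≠ a → w ≠ c → w = x ∨ w = y :=
    fun w hw _ h1 h2 => sub_b w hw h1 h2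
  have hone_a : A b a ∨ A c a := one_in hda sub_a
  have hone_b : A a b ∨ A c b := one_in hdb (fun w hw h1 h2 => sub_b w hw h1 h2)
  have hone_c : A a c ∨ A b c := one_in hdc (fun w hw h1 h2 => sub_c w hw h1 h2)
  rcases hone_a with hba | hca
  · -- b → a ; cycle a → c → b → a, so (p,q,r) = (a,c,b)
    have hnab : ¬ A a b := hori b a hba
    have hnca : ¬ A c a := fun h => nd_a ⟨hba, h⟩
    have hcb : A c b := hone_b.resolve_left hnab
    have hnbc : ¬ A b c := hori c b hcb
    have hac2 : A a c := hone_c.resolve_right hnbc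
    refine ⟨a, c, b, x, y, hac, hab, hbc.symm, hxy, hav, hcv, hbv,
      hxa, hxc, hxb, hya, hyc, hyb, hac2, hcb, hba, ?_, ?_, ?_⟩
    · intro w
      constructor
      · intro hw
        by_cases h1 : w = b
        · exact Or.inl h1
        by_cases h2 : w = c
        · exact absurd (h2 ▸ hw) hnca
        exact Or.inr (sub_a w hw h1 h2)
      · rintro (rfl | rfl | rfl) <;> assumption
    · intro w
      constructor
      · intro hw
        by_cases h1 : w = a
        · exact Or.inl h1
        by_cases h2 : w = b
        · exact absurd (h2 ▸ hw) hnbc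
        exact Or.inr (sub_c w hw h1 h2)
      · rintro (rfl | rfl | rfl) <;> assumption
    · intro w
      constructor
      · intro hw
        by_cases h1 : w = c
        · exact Or.inl h1
        by_cases h2 : w = a
        · exact absurd (h2 ▸ hw) hnab
        exact Or.inr (sub_b w hw h2 h1)
      · rintro (rfl | rfl | rfl) <;> assumption
  · -- c → a ; cycle a → b → c → a, so (p,q,r) = (a,b,c)
    have hnac : ¬ A a c := hori c a hca
    have hnba : ¬ A b a := fun h => nd_a ⟨h, hca⟩
    have hbc2 : A b c := hone_c.resolve_left hnac
    have hncb : ¬ A c b := hori b c hbc2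
    have hab2 : A a b := hone_b.resolve_right hncb
    refine ⟨a, b, c, x, y, hab, hac, hbc, hxy, hav, hbv, hcv,
      hxa, hxb, hxc, hya, hyb, hyc, hab2, hbc2, hca, ?_, ?_, ?_⟩
    · intro w
      constructor
      · intro hw
        by_cases h1 : w = c
        · exact Or.inl h1
        by_cases h2 : w = b
        · exact absurd (h2 ▸ hw) hnba
        exact Or.inr (sub_a w hw h2 h1)
      · rintro (rfl | rfl | rfl) <;> assumption
    · intro w
      constructor
      · intro hw
        by_cases h1 : w = a
        · exact Or.inl h1
        by_cases h2 : w = c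
        · exact absurd (h2 ▸ hw) hncb
        exact Or.inr (sub_b w hw h1 h2)
      · rintro (rfl | rfl | rfl) <;> assumption
    · intro w
      constructor
      · intro hw
        by_cases h1 : w = b
        · exact Or.inl h1
        by_cases h2 : w = a
        · exact absurd (h2 ▸ hw) hnac
        exact Or.inr (sub_c w hw h2 h1)
      · rintro (rfl | rfl | rfl) <;> assumption

lemma extra_lemma {V : Type*} {A : V → V → Prop} (hori : IsOriented A)
    (hfree : SFree A 3) {v p q r x y : V}
    (hpv : A p v) (hqv : A q v) (hrv : A r v)
    (hpq : p ≠ q) (hpr : p ≠ r) (hqr : q ≠ r) (hxy : x ≠ y)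
    (hxp : A x p) (hxq : A x q) (hxr : A x r)
    (hyp2 : A y p) (hyq : A y q) (hyr : A y r)
    (hpq2 : A p q) (hqr2 : A q r) (hrp : A r p)
    {u w : V} (huv : A u v) (hup : u ≠ p) (huq : u ≠ q) (hur : u ≠ r)
    (hw : A w u) :
    (u = x ∧ w = y) ∨ (u = y ∧ w = x) := by
  have irr : ∀ z : V, ¬ A z z := fun z h => hori z z h h
  have xnp : x ≠ p := fun h => irr p (h ▸ hxp)
  have xnq : x ≠ q := fun h => irr q (h ▸ hxq)
  have xnr : x ≠ r := fun h => irr r (h ▸ hxr)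
  have ynp : y ≠ p := fun h => irr p (h ▸ hyp2)
  have ynq : y ≠ q := fun h => irr q (h ▸ hyq)
  have ynr : y ≠ r := fun h => irr r (h ▸ hyr)
  by_cases hux : u = x
  · subst hux
    -- in-neighbours of u = x : can't be p, q, r by orientation
    have wnp : w ≠ p := fun h => hori u p hxp (h ▸ hw)
    have wnq : w ≠ q := fun h => hori u q hxq (h ▸ hw)
    have wnr : w ≠ r := fun h => hori u r hxr (h ▸ hw)
    by_cases hwy : w = y
    · exact Or.inl ⟨rfl, hwy⟩
    exfalso
    exact hfree v (copy_of hori hpv hqv huv hrp hyq hw hpq hup.symm huq.symm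
      ynr.symm (fun h => wnr h.symm) (fun h => hwy h.symm)
      hqr.symm hur.symm ynp (hxy.symm) wnp wnq)
  by_cases huy : u = y
  · subst huy
    have wnp : w ≠ p := fun h => hori u p hyp2 (h ▸ hw)
    have wnq : w ≠ q := fun h => hori u q hyq (h ▸ hw)
    have wnr : w ≠ r := fun h => hori u r hyr (h ▸ hw)
    by_cases hwx : w = x
    · exact Or.inr ⟨rfl, hwx⟩
    exfalso
    exact hfree v (copy_of hori hpv hqv huv hrp hxq hw hpq hup.symm huq.symm
      xnr.symm (fun h => wnr h.symm) (fun h => hwx h.symm)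
      hqr.symm hur.symm xnp hxy wnp wnq)
  exfalso
  have unx : x ≠ u := fun h => hux h.symm
  have uny : y ≠ u := fun h => huy h.symm
  by_cases hwp : w = p
  · subst hwp
    exact hfree v (copy_of hori hqv hrv huv hxq hyr hw hqr huq.symm hur.symm
      hxy xnp ynp xnr unx ynq uny hpq hpr)
  by_cases hwq : w = q
  · subst hwq
    exact hfree v (copy_of hori hpv hrv huv hxp hyr hw hpr hup.symm hur.symm
      hxy xnq ynq xnr unx ynp uny hpq.symm hqr)
  by_cases hwr : w = r
  · subst hwr
    exact hfree v (copy_of hori hpv hqv huv hxp hyq hw hpq hup.symm huq.symm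
      hxy xnr ynr xnq unx ynp uny hpr.symm hqr.symm)
  by_cases hwx : w = x
  · subst hwx
    exact hfree v (copy_of hori hpv hqv huv hrp hyq hw hpq hup.symm huq.symm
      ynr.symm xnr.symm (fun h => hxy h.symm)
      hqr.symm hur.symm ynp uny xnp xnq)
  by_cases hwy : w = y
  · subst hwy
    exact hfree v (copy_of hori hpv hqv huv hrp hxq hw hpq hup.symm huq.symm
      xnr.symm ynr.symm hxy
      hqr.symm hur.symm xnp unx ynp ynq)
  · exact hfree v (copy_of hori hpv hqv huv hxp hyq hw hpq hup.symm huq.symm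
      hxy (fun h => hwx h.symm) (fun h => hwy h.symm)
      xnq unx ynp uny hwp hwq)

lemma ncard_le_one_of_subsingleton {V : Type*} {s : Set V} (h : s.Subsingleton) :
    s.ncard ≤ 1 := by
  rcases s.eq_empty_or_nonempty with rfl | ⟨w, hw⟩
  · simp
  · have hsub : s ⊆ {w} := fun z hz => h hz hw
    calc s.ncard ≤ ({w} : Set V).ncard :=
          Set.ncard_le_ncard hsub (Set.finite_singleton w)
      _ = 1 := Set.ncard_singleton w

/-- Lemma 2.5: in an `S_{3,1}`-free oriented graph, if at least
three in-neighbours of `v` have in-degree ≥ 3, then exactly three in-neighbours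
of `v` have in-degree 3, none has in-degree larger than 3 (or equal to 2),
at most one has in-degree 1, and all the others have in-degree 0; i.e. the
multiset of in-degrees of `N⁻(v)` is `{3,3,3,1,0,…,0}` or `{3,3,3,0,…,0}`. -/
theorem indeg_seq_of_SFree31 {V : Type*} [Fintype V] (A : V → V → Prop)
    (hori : IsOriented A) (hfree : SFree A 3) (v : V)
    (h3 : 3 ≤ {u : V | A u v ∧ 3 ≤ inDeg A u}.ncard) :
    {u : V | A u v ∧ inDeg A u = 3}.ncard = 3 ∧
    (∀ u : V, A u v → inDeg A u ≤ 3) ∧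
    {u : V | A u v ∧ inDeg A u = 1}.ncard ≤ 1 ∧
    (∀ u : V, A u v → inDeg A u = 3 ∨ inDeg A u = 1 ∨ inDeg A u = 0) := by
  obtain ⟨t, hts, htc⟩ := Set.exists_subset_card_eq h3
  rw [Set.ncard_eq_three] at htc
  obtain ⟨a, b, c, hab, hac, hbc, rfl⟩ := htc
  obtain ⟨hav, hda⟩ := hts (show a ∈ ({a, b, c} : Set V) by simp)
  obtain ⟨hbv, hdb⟩ := hts (show b ∈ ({a, b, c} : Set V) by simp)
  obtain ⟨hcv, hdc⟩ := hts (show c ∈ ({a, b, c} : Set V) by simp)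
  obtain ⟨p, q, r, x, y, hpq, hpr, hqr, hxy, hpv, hqv, hrv,
    hxp, hxq, hxr, hyp2, hyq, hyr, hpq2, hqr2, hrp, chp, chq, chr⟩ :=
    structure_lemma hori hfree hab hac hbc hav hbv hcv hda hdb hdc
  have irr : ∀ z : V, ¬ A z z := fun z h => hori z z h h
  have xnp : x ≠ p := fun h => irr p (h ▸ hxp)
  have xnq : x ≠ q := fun h => irr q (h ▸ hxq)
  have xnr : x ≠ r := fun h => irr r (h ▸ hxr)
  have ynp : y ≠ p := fun h => irr p (h ▸ hyp2)
  have ynq : y ≠ q := fun h => irr q (h ▸ hyq)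
  have ynr : y ≠ r := fun h => irr r (h ▸ hyr)
  have degp : inDeg A p = 3 := by
    have hNp : {w : V | A w p} = {r, x, y} := Set.ext fun w => by
      simpa using chp w
    rw [inDeg, hNp]
    exact Set.ncard_eq_three.mpr ⟨r, x, y, xnr.symm, ynr.symm, hxy, rfl⟩
  have degq : inDeg A q = 3 := by
    have hNq : {w : V | A w q} = {p, x, y} := Set.ext fun w => by
      simpa using chq w
    rw [inDeg, hNq]
    exact Set.ncard_eq_three.mpr ⟨p, x, y, xnp.symm, ynp.symm, hxy, rfl⟩
  have degr : inDeg A r = 3 := by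
    have hNr : {w : V | A w r} = {q, x, y} := Set.ext fun w => by
      simpa using chr w
    rw [inDeg, hNr]
    exact Set.ncard_eq_three.mpr ⟨q, x, y, xnq.symm, ynq.symm, hxy, rfl⟩
  have key : ∀ u, A u v → u ≠ p → u ≠ q → u ≠ r → ∀ w, A w u →
      (u = x ∧ w = y) ∨ (u = y ∧ w = x) := fun u huv h1 h2 h3' w hw =>
    extra_lemma hori hfree hpv hqv hrv hpq hpr hqr hxy hxp hxq hxr hyp2 hyq hyr
      hpq2 hqr2 hrp huv h1 h2 h3' hw
  have small : ∀ u, A u v → u ≠ p → u ≠ q → u ≠ r → inDeg A u ≤ 1 := by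
    intro u huv h1 h2 h3'
    apply ncard_le_one_of_subsingleton
    intro w1 hw1 w2 hw2
    rcases key u huv h1 h2 h3' w1 hw1 with ⟨hu1, hww1⟩ | ⟨hu1, hww1⟩ <;>
      rcases key u huv h1 h2 h3' w2 hw2 with ⟨hu2, hww2⟩ | ⟨hu2, hww2⟩
    · exact hww1.trans hww2.symm
    · exact absurd (hu1.symm.trans hu2) hxy
    · exact absurd (hu2.symm.trans hu1) hxy
    · exact hww1.trans hww2.symm
  have hset : {u : V | A u v ∧ inDeg A u = 3} = {p, q, r} := by
    ext u
    simp only [Set.mem_setOf_eq, Set.mem_insert_iff, Set.mem_singleton_iff]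
    constructor
    · rintro ⟨huv, hdu⟩
      by_contra h
      push_neg at h
      obtain ⟨h1, h2, h3'⟩ := h
      have := small u huv h1 h2 h3'
      omega
    · rintro (rfl | rfl | rfl)
      · exact ⟨hpv, degp⟩
      · exact ⟨hqv, degq⟩
      · exact ⟨hrv, degr⟩
  refine ⟨?_, ?_, ?_, ?_⟩
  · rw [hset]
    exact Set.ncard_eq_three.mpr ⟨p, q, r, hpq, hpr, hqr, rfl⟩
  · intro u huv
    by_cases h1 : u = p
    · subst h1; omega
    by_cases h2 : u = q
    · subst h2; omega
    by_cases h3' : u = r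
    · subst h3'; omega
    have := small u huv h1 h2 h3'
    omega
  · apply ncard_le_one_of_subsingleton
    rintro u1 ⟨h1v, h1d⟩ u2 ⟨h2v, h2d⟩
    have hu1p : u1 ≠ p := fun h => by rw [h, degp] at h1d; omega
    have hu1q : u1 ≠ q := fun h => by rw [h, degq] at h1d; omega
    have hu1r : u1 ≠ r := fun h => by rw [h, degr] at h1d; omega
    have hu2p : u2 ≠ p := fun h => by rw [h, degp] at h2d; omega
    have hu2q : u2 ≠ q := fun h => by rw [h, degq] at h2d; omega
    have hu2r : u2 ≠ r := fun h => by rw [h, degr] at h2d; omega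
    obtain ⟨w1, hw1⟩ := Set.nonempty_of_ncard_ne_zero
      (show ({w : V | A w u1}).ncard ≠ 0 by rw [← inDeg, h1d]; omega)
    obtain ⟨w2, hw2⟩ := Set.nonempty_of_ncard_ne_zero
      (show ({w : V | A w u2}).ncard ≠ 0 by rw [← inDeg, h2d]; omega)
    rcases key u1 h1v hu1p hu1q hu1r w1 hw1 with ⟨hu1, hww1⟩ | ⟨hu1, hww1⟩ <;>
      rcases key u2 h2v hu2p hu2q hu2r w2 hw2 with ⟨hu2, hww2⟩ | ⟨hu2, hww2⟩
    · exact hu1.trans hu2.symm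
    · exfalso
      rw [Set.mem_setOf_eq] at hw1 hw2
      rw [hu1, hww1] at hw1
      rw [hu2, hww2] at hw2
      exact hori _ _ hw1 hw2
    · exfalso
      rw [Set.mem_setOf_eq] at hw1 hw2
      rw [hu1, hww1] at hw1
      rw [hu2, hww2] at hw2
      exact hori _ _ hw2 hw1
    · exact hu1.trans hu2.symm
  · intro u huv
    by_cases h1 : u = p
    · subst h1; omega
    by_cases h2 : u = q
    · subst h2; omega
    by_cases h3' : u = r
    · subst h3'; omega
    have := small u huv h1 h2 h3'
    omega
end

section
/- Let n ≥ 16 and let D be an S_{2,1}-free oriented graph on n vertices with at least ⌊(n+1)²/4⌋ arcs. Then: (a) every vertex of D has at most one in-neighbor whose in-degree is at least 2; and (b) the set X = {v ∈ V(D) : d⁻(v) ≤ 1} satisfies n/2 − √(n/2) < |X| < n/2 + √(n/2) (as real numbers). -/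
/-!
(a) If two in-neighbours `u₁, u₂` of `v` had in-degree at least 2, then, as `u₁ → u₂` and
`u₂ → u₁` are not both arcs, they would have distinct in-neighbours `w₁ ≠ u₂`, `w₂ ≠ u₁`,
and these form an `S_{2,1}` centred at `v`.

(b) Let `X` be the set of vertices of in-degree at most 1 and `x = |X|`. By (a) a vertex
outside `X` has in-degree at most `x + 1`, so `a(D) ≤ x + (n - x)(x + 1) = n + x(n - x)`;
together with `4 a(D) ≥ n² + 2n - 2` this gives `(n - 2x)² ≤ 2n + 2`, hence `3 ≤ x < n`.
If all these degree bounds were attained, every vertex outside `X` would receive arcs from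
all of `X` and from some vertex `y` outside `X`, and every vertex of `X` would have an
in-neighbour, necessarily in `X`; with `|X| ≥ 3` this produces an `S_{2,1}`. So the arc bound
is strict, which sharpens the estimate to `(n - 2x)² < 2n`, i.e. `|x - n/2| < √(n/2)`.
-/

open Finset

namespace IsOriented

variable {V : Type*} {A : V → V → Prop}

theorem irrefl (hA : IsOriented A) (v : V) : ¬ A v v := fun h => hA v v h h

theorem hasSCopyAt_two (hA : IsOriented A) {v u₁ u₂ w₁ w₂ : V} (hu : u₁ ≠ u₂) (hw : w₁ ≠ w₂)
    (hu₁w₂ : u₁ ≠ w₂) (hu₂w₁ : u₂ ≠ w₁) (hw₁ : A w₁ u₁) (hw₂ : A w₂ u₂)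
    (hu₁ : A u₁ v) (hu₂ : A u₂ v) : HasSCopyAt A 2 v := by
  have hu₁w₁ : u₁ ≠ w₁ := by rintro rfl; exact hA.irrefl _ hw₁
  have hu₂w₂ : u₂ ≠ w₂ := by rintro rfl; exact hA.irrefl _ hw₂
  have hu₁v : u₁ ≠ v := by rintro rfl; exact hA.irrefl _ hu₁
  have hu₂v : u₂ ≠ v := by rintro rfl; exact hA.irrefl _ hu₂
  have hw₁v : w₁ ≠ v := by rintro rfl; exact hA _ _ hu₁ hw₁
  have hw₂v : w₂ ≠ v := by rintro rfl; exact hA _ _ hu₂ hw₂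
  refine ⟨![u₁, u₂], ![w₁, w₂], ?_, ?_, ?_, ?_, ?_, ?_, ?_⟩ <;>
    intro i <;> try intro j
  all_goals fin_cases i <;> try fin_cases j
  all_goals simp_all [hu.symm, hw.symm]

theorem hasSCopyAt_two_of_two_le_inDeg (hA : IsOriented A) {v u₁ u₂ : V} (hu : u₁ ≠ u₂)
    (hu₁ : A u₁ v) (hu₂ : A u₂ v) (hd₁ : 2 ≤ inDeg A u₁) (hd₂ : 2 ≤ inDeg A u₂)
    (hu₂u₁ : ¬ A u₂ u₁) : HasSCopyAt A 2 v := by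
  obtain ⟨w₂, hw₂, hw₂u₁⟩ := Set.exists_ne_of_one_lt_ncard hd₂ u₁
  obtain ⟨w₁, hw₁, hw₁w₂⟩ := Set.exists_ne_of_one_lt_ncard hd₁ w₂
  exact hA.hasSCopyAt_two hu hw₁w₂ (Ne.symm hw₂u₁) (by rintro rfl; exact hu₂u₁ hw₁)
    hw₁ hw₂ hu₁ hu₂

theorem ncard_inNbrs_two_le_inDeg_le_one (hA : IsOriented A) (hfree : SFree A 2) (v : V) :
    {u | A u v ∧ 2 ≤ inDeg A u}.ncard ≤ 1 := by
  by_contra! h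
  obtain ⟨u₁, ⟨hu₁, hd₁⟩, u₂, ⟨hu₂, hd₂⟩, hne⟩ :=
    (Set.one_lt_ncard (Set.finite_of_ncard_pos (by omega))).mp h
  by_cases hu₂u₁ : A u₂ u₁
  · exact hfree v (hA.hasSCopyAt_two_of_two_le_inDeg hne.symm hu₂ hu₁ hd₂ hd₁ (hA _ _ hu₂u₁))
  · exact hfree v (hA.hasSCopyAt_two_of_two_le_inDeg hne hu₁ hu₂ hd₁ hd₂ hu₂u₁)

theorem hasSCopyAt_two_of_dominated (hA : IsOriented A) {S : Set V} (hS : 2 < S.ncard)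
    (hdom : ∀ v ∉ S, ∀ u ∈ S, A u v) (hout : ∀ v ∉ S, ∃ y ∉ S, A y v)
    (hin : ∀ u ∈ S, ∃ w, A w u) {v : V} (hv : v ∉ S) : HasSCopyAt A 2 v := by
  obtain ⟨y, hyS, hyv⟩ := hout v hv
  obtain ⟨u, huS⟩ : S.Nonempty := Set.nonempty_of_ncard_ne_zero (by omega)
  obtain ⟨w, hwu⟩ := hin u huS
  have hwS : w ∈ S := by
    by_contra hwS
    exact hA _ _ hwu (hdom w hwS u huS)
  obtain ⟨w', hw'S, hw'⟩ := Set.exists_mem_notMem_of_ncard_lt_ncard (t := S)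
    ((Set.ncard_insert_le u {w}).trans_lt (by rw [Set.ncard_singleton]; omega))
  simp only [Set.mem_insert_iff, Set.mem_singleton_iff, not_or] at hw'
  exact hA.hasSCopyAt_two (u₁ := y) (w₁ := w') (by rintro rfl; exact hyS huS) hw'.2
    (by rintro rfl; exact hyS hwS) (Ne.symm hw'.1)
    (hdom y hyS w' hw'S) hwu hyv (hdom v hv u huS)

section Finite

variable [Finite V]

variable (A) in
theorem inDeg_eq_ncard_inter_add_ncard (v : V) :
    inDeg A v = ({u | A u v} ∩ {u | inDeg A u ≤ 1}).ncard
      + {u | A u v ∧ 2 ≤ inDeg A u}.ncard := by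
  have hdiff : {u | A u v ∧ 2 ≤ inDeg A u} = {u | A u v} \ {u | inDeg A u ≤ 1} := by
    ext u
    simp [Nat.lt_iff_add_one_le]
  rw [hdiff, Set.ncard_inter_add_ncard_sdiff_eq_ncard, inDeg]

theorem inDeg_le_ncard_add_one (hA : IsOriented A) (hfree : SFree A 2) (v : V) :
    inDeg A v ≤ {u | inDeg A u ≤ 1}.ncard + 1 := by
  rw [inDeg_eq_ncard_inter_add_ncard]
  exact add_le_add (Set.ncard_le_ncard Set.inter_subset_right)
    (hA.ncard_inNbrs_two_le_inDeg_le_one hfree v)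

theorem dominated_of_ncard_add_one_le_inDeg (hA : IsOriented A) (hfree : SFree A 2) {v : V}
    (hv : {u | inDeg A u ≤ 1}.ncard + 1 ≤ inDeg A v) :
    (∀ u, inDeg A u ≤ 1 → A u v) ∧ ∃ y, ¬ inDeg A y ≤ 1 ∧ A y v := by
  have hsplit := inDeg_eq_ncard_inter_add_ncard A v
  have hlow := Set.ncard_le_ncard
    (Set.inter_subset_right (s := {u | A u v}) (t := {u | inDeg A u ≤ 1}))
  have hhigh := hA.ncard_inNbrs_two_le_inDeg_le_one hfree v
  constructor
  · have hall := Set.eq_of_subset_of_ncard_le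
      (Set.inter_subset_right (s := {u | A u v}) (t := {u | inDeg A u ≤ 1})) (by omega)
    exact fun u hu => (hall.symm.subset hu).1
  · obtain ⟨y, hyv, hy⟩ := Set.nonempty_of_ncard_ne_zero (s := {u | A u v ∧ 2 ≤ inDeg A u})
      (by omega)
    exact ⟨y, by omega, hyv⟩

theorem inDeg_le_ite (hA : IsOriented A) (hfree : SFree A 2) (v : V) :
    inDeg A v ≤ if inDeg A v ≤ 1 then 1 else {u | inDeg A u ≤ 1}.ncard + 1 := by
  split_ifs with h
  · exact h
  · exact hA.inDeg_le_ncard_add_one hfree v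

end Finite

section Fintype

variable [Fintype V]

variable (A) in
theorem arcCount_eq_sum_inDeg : arcCount A = ∑ v, inDeg A v := by
  classical
  simp only [arcCount, inDeg, Set.ncard_eq_toFinset_card', Set.toFinset_ofPred, card_filter]
  rw [Fintype.sum_prod_type, sum_comm]

variable (A) in
theorem sum_ite_inDeg_le_one :
    ∑ v, (if inDeg A v ≤ 1 then 1 else {u | inDeg A u ≤ 1}.ncard + 1)
      = Fintype.card V
        + {u | inDeg A u ≤ 1}.ncard * (Fintype.card V - {u | inDeg A u ≤ 1}.ncard) := by
  classical
  have hx : {u | inDeg A u ≤ 1}.ncard = #{v | inDeg A v ≤ 1} := by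
    rw [Set.ncard_eq_toFinset_card', Set.toFinset_ofPred]
  have hnx := card_filter_add_card_filter_not (s := univ) (fun v => inDeg A v ≤ 1)
  rw [card_univ] at hnx
  rw [hx, sum_ite, sum_const, sum_const, smul_eq_mul, smul_eq_mul, ← hnx,
    Nat.add_sub_cancel_left]
  ring

theorem arcCount_le (hA : IsOriented A) (hfree : SFree A 2) :
    arcCount A ≤ Fintype.card V
      + {u | inDeg A u ≤ 1}.ncard * (Fintype.card V - {u | inDeg A u ≤ 1}.ncard) := by
  rw [arcCount_eq_sum_inDeg, ← sum_ite_inDeg_le_one]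
  exact sum_le_sum fun v _ => hA.inDeg_le_ite hfree v

theorem arcCount_lt (hA : IsOriented A) (hfree : SFree A 2)
    (hx : 2 < {u | inDeg A u ≤ 1}.ncard) (hxV : {u | inDeg A u ≤ 1}.ncard < Fintype.card V) :
    arcCount A < Fintype.card V
      + {u | inDeg A u ≤ 1}.ncard * (Fintype.card V - {u | inDeg A u ≤ 1}.ncard) := by
  rw [arcCount_eq_sum_inDeg, ← sum_ite_inDeg_le_one]
  refine sum_lt_sum (fun v _ => hA.inDeg_le_ite hfree v) ?_
  by_contra! htight
  have hhigh (v : V) (hv : ¬ inDeg A v ≤ 1) := hA.dominated_of_ncard_add_one_le_inDeg hfree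
    (v := v) (by simpa [hv] using htight v (mem_univ v))
  have hlow (u : V) (hu : inDeg A u ≤ 1) : ∃ w, A w u := by
    have : 1 ≤ inDeg A u := by simpa [hu] using htight u (mem_univ u)
    exact Set.nonempty_of_ncard_ne_zero (s := {w | A w u}) (by rw [inDeg] at this; omega)
  obtain ⟨v, -, hv⟩ :=
    Set.exists_mem_notMem_of_ncard_lt_ncard (s := {u | inDeg A u ≤ 1}) (t := Set.univ)
      (by rwa [Set.ncard_univ, Nat.card_eq_fintype_card])
  exact hfree v (hA.hasSCopyAt_two_of_dominated hx (fun v hv => (hhigh v hv).1)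
    (fun v hv => (hhigh v hv).2) hlow hv)

end Fintype

end IsOriented

theorem two_lt_and_lt_of_sq_sub_two_mul_le {n x : ℤ} (hn : 16 ≤ n)
    (h : (n - 2 * x) ^ 2 ≤ 2 * n + 2) : 2 < x ∧ x < n := by
  constructor <;> by_contra! hx <;> nlinarith

/-- Claim 2.1: if `n ≥ 16` and `D` is an `S_{2,1}`-free oriented
graph on `n` vertices with at least `⌊(n+1)²/4⌋` arcs, then (a) every vertex has
at most one in-neighbour of in-degree ≥ 2, and (b) the set
`X = {v : d⁻(v) ≤ 1}` satisfies `n/2 - √(n/2) < |X| < n/2 + √(n/2)`. -/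
theorem claim_S21 {V : Type*} [Fintype V] (A : V → V → Prop)
    (n : ℕ) (hn : 16 ≤ n) (hcard : Fintype.card V = n)
    (hori : IsOriented A) (hfree : SFree A 2)
    (harcs : (n + 1) ^ 2 / 4 ≤ arcCount A) :
    (∀ v : V, {u : V | A u v ∧ 2 ≤ inDeg A u}.ncard ≤ 1) ∧
    ((n : ℝ) / 2 - Real.sqrt ((n : ℝ) / 2)
        < ({v : V | inDeg A v ≤ 1}.ncard : ℝ) ∧
      ({v : V | inDeg A v ≤ 1}.ncard : ℝ)
        < (n : ℝ) / 2 + Real.sqrt ((n : ℝ) / 2)) := by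
  refine ⟨hori.ncard_inNbrs_two_le_inDeg_le_one hfree, ?_⟩
  set x := {v : V | inDeg A v ≤ 1}.ncard
  have hxn : x ≤ n := by
    rw [← hcard, ← Nat.card_eq_fintype_card]
    exact Set.ncard_le_card _
  have hfloor : n ^ 2 + 2 * n ≤ 4 * arcCount A + 2 := by
    have := (Nat.div_lt_iff_lt_mul (by norm_num)).mp (Nat.lt_succ_of_le harcs)
    nlinarith
  have hle : arcCount A ≤ n + x * (n - x) := hcard ▸ hori.arcCount_le hfree
  zify [hxn] at hle hfloor
  obtain ⟨hx, hxlt⟩ := two_lt_and_lt_of_sq_sub_two_mul_le (n := n) (x := x)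
    (by exact_mod_cast hn) (by nlinarith)
  have hlt : arcCount A < n + x * (n - x) :=
    hcard ▸ hori.arcCount_lt hfree (by exact_mod_cast hx) (by omega)
  zify [hxn] at hlt
  have hsqℤ : ((n : ℤ) - 2 * x) ^ 2 < 2 * n := by nlinarith
  have hsqℝ : ((n : ℝ) - 2 * x) ^ 2 < 2 * n := by exact_mod_cast hsqℤ
  have hdev : |(x : ℝ) - n / 2| < √(n / 2) :=
    (Real.lt_sqrt (abs_nonneg _)).mpr (by rw [sq_abs]; nlinarith)
  constructor <;> linarith [abs_lt.mp hdev]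
end

section
/- Let n ≥ 40 and let D be an S_{3,1}-free oriented graph on n vertices with at least ⌊(n+2)²/4⌋ arcs. Then: (a) every vertex of D has at most two in-neighbors whose in-degree is at least 3; and (b) the set X = {v ∈ V(D) : d⁻(v) ≤ 2} satisfies n/2 − √n < |X| < n/2 + √n (as real numbers). -/
set_option linter.unusedVariables false
set_option linter.unusedSectionVars false

section Machinery
variable {V : Type*} {A : V → V → Prop}

lemma ncard_setOf_eq_card_filter [Fintype V] (P : V → Prop) [DecidablePred P] :
    {u : V | P u}.ncard = (Finset.univ.filter P).card := by
  rw [Set.ncard_eq_toFinset_card']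
  simp

lemma arcCount_eq_sum [Fintype V] (A : V → V → Prop) :
    arcCount A = ∑ v : V, inDeg A v := by
  classical
  rw [arcCount, ncard_setOf_eq_card_filter]
  rw [Finset.card_eq_sum_card_fiberwise (f := Prod.snd) (t := Finset.univ) (fun x _ => Finset.mem_univ _)]
  refine Finset.sum_congr rfl fun v _ => ?_
  rw [inDeg, ncard_setOf_eq_card_filter]
  apply Finset.card_bij (fun p _ => p.1)
  · intro p hp; simp at hp ⊢; rw [← hp.2]; exact hp.1
  · intro p hp q hq h
    simp at hp hq
    exact Prod.ext h (hp.2.trans hq.2.symm)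
  · intro u hu; simp at hu; exact ⟨(u, v), by simp [hu], rfl⟩

lemma irrefl_of_oriented (hori : IsOriented A) (v : V) : ¬ A v v := fun h => hori v v h h

lemma copy_builder (hori : IsOriented A) {v u1 u2 u3 w1 w2 w3 : V}
    (hu12 : u1 ≠ u2) (hu13 : u1 ≠ u3) (hu23 : u2 ≠ u3)
    (hw12 : w1 ≠ w2) (hw13 : w1 ≠ w3) (hw23 : w2 ≠ w3)
    (hwu : ∀ w ∈ [w1, w2, w3], ∀ u ∈ [u1, u2, u3], w ≠ u)
    (ha1 : A u1 v) (ha2 : A u2 v) (ha3 : A u3 v)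
    (hb1 : A w1 u1) (hb2 : A w2 u2) (hb3 : A w3 u3) :
    HasSCopyAt A 3 v := by
  have huv : ∀ u, A u v → u ≠ v := fun u h he => irrefl_of_oriented hori v (he ▸ h)
  have hwv : ∀ w u, A w u → A u v → w ≠ v := fun w u h1 h2 he =>
    hori u v h2 (he ▸ h1)
  refine ⟨![u1, u2, u3], ![w1, w2, w3], ?_, ?_, ?_, ?_, ?_, ?_, ?_⟩
  · intro i j h; fin_cases i <;> fin_cases j <;> simp_all
  · intro i j h; fin_cases i <;> fin_cases j <;> simp_all
  · intro i j
    fin_cases i <;> fin_cases j <;>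
      simp only [Matrix.cons_val_zero, Matrix.cons_val_one, Matrix.head_cons,
        Matrix.cons_val_two, Matrix.tail_cons] <;>
    · exact fun h => hwu _ (by simp) _ (by simp) h.symm
  · intro i; fin_cases i <;>
      [exact huv _ ha1; exact huv _ ha2; exact huv _ ha3]
  · intro i; fin_cases i <;>
      [exact hwv _ _ hb1 ha1; exact hwv _ _ hb2 ha2; exact hwv _ _ hb3 ha3]
  · intro i; fin_cases i <;> simpa
  · intro i; fin_cases i <;> simpa



open Classical in
lemma ncard_inter_pair [Fintype V] {N : Set V} {a b : V} (hab : a ≠ b) :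
    (N ∩ {a, b}).ncard = (if a ∈ N then 1 else 0) + (if b ∈ N then 1 else 0) := by
  classical
  by_cases ha : a ∈ N <;> by_cases hb : b ∈ N
  · have : N ∩ {a, b} = {a, b} := by
      ext x; simp only [Set.mem_inter_iff, Set.mem_insert_iff, Set.mem_singleton_iff]
      constructor
      · tauto
      · rintro (rfl | rfl) <;> tauto
    rw [this, Set.ncard_pair hab]; simp [ha, hb]
  · have : N ∩ {a, b} = {a} := by
      ext x; simp only [Set.mem_inter_iff, Set.mem_insert_iff, Set.mem_singleton_iff]
      constructor
      · rintro ⟨h1, rfl | rfl⟩ <;> tauto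
      · rintro rfl; tauto
    rw [this, Set.ncard_singleton]; simp [ha, hb]
  · have : N ∩ {a, b} = {b} := by
      ext x; simp only [Set.mem_inter_iff, Set.mem_insert_iff, Set.mem_singleton_iff]
      constructor
      · rintro ⟨h1, rfl | rfl⟩ <;> tauto
      · rintro rfl; tauto
    rw [this, Set.ncard_singleton]; simp [ha, hb]
  · have : N ∩ {a, b} = ∅ := by
      ext x; simp only [Set.mem_inter_iff, Set.mem_insert_iff, Set.mem_singleton_iff]
      constructor
      · rintro ⟨h1, rfl | rfl⟩ <;> tauto
      · rintro ⟨⟩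
    rw [this, Set.ncard_empty]; simp [ha, hb]


/-- no system of distinct representatives for the in-neighbourhoods. -/
lemma no_sdr (hori : IsOriented A) (hfree : SFree A 3) {v u1 u2 u3 w1 w2 w3 : V}
    (h12 : u1 ≠ u2) (h13 : u1 ≠ u3) (h23 : u2 ≠ u3)
    (ha1 : A u1 v) (ha2 : A u2 v) (ha3 : A u3 v)
    (hw1 : w1 ∈ {w : V | A w u1} \ {u1, u2, u3})
    (hw2 : w2 ∈ {w : V | A w u2} \ {u1, u2, u3})
    (hw3 : w3 ∈ {w : V | A w u3} \ {u1, u2, u3})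
    (hw12 : w1 ≠ w2) (hw13 : w1 ≠ w3) (hw23 : w2 ≠ w3) : False := by
  obtain ⟨hb1, hn1⟩ := hw1
  obtain ⟨hb2, hn2⟩ := hw2
  obtain ⟨hb3, hn3⟩ := hw3
  simp only [Set.mem_insert_iff, Set.mem_singleton_iff, not_or] at hn1 hn2 hn3
  refine hfree v (copy_builder hori h12 h13 h23 hw12 hw13 hw23 ?_ ha1 ha2 ha3 hb1 hb2 hb3)
  intro w hw u hu
  simp only [List.mem_cons, List.not_mem_nil, or_false, List.mem_singleton] at hw hu
  rcases hw with rfl | rfl | rfl <;> rcases hu with rfl | rfl | rfl <;> tauto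




lemma triple_comm1 (a b c : V) : ({b, a, c} : Set V) = {a, b, c} := by
  ext x; simp only [Set.mem_insert_iff, Set.mem_singleton_iff]; tauto

lemma triple_rot (a b c : V) : ({b, c, a} : Set V) = {a, b, c} := by
  ext x; simp only [Set.mem_insert_iff, Set.mem_singleton_iff]; tauto

lemma triple_comm2 (a b c : V) : ({c, a, b} : Set V) = {a, b, c} := by
  ext x; simp only [Set.mem_insert_iff, Set.mem_singleton_iff]; tauto

section Fin
variable [Fintype V]

/-- the in-neighbourhood is contained in `B ∪ {u2,u3}`. -/
lemma nbhd_subset (hori : IsOriented A) (u1 u2 u3 : V) :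
    {w : V | A w u1} ⊆ ({w : V | A w u1} \ {u1, u2, u3}) ∪ {u2, u3} := by
  intro w hw
  by_cases hwS : w ∈ ({u1, u2, u3} : Set V)
  · rcases hwS with rfl | h
    · exact absurd hw (irrefl_of_oriented hori w)
    · exact Or.inr h
  · exact Or.inl ⟨hw, hwS⟩

lemma B_lower (hori : IsOriented A) {u1 u2 u3 : V} (h23 : u2 ≠ u3)
    (hd1 : 3 ≤ inDeg A u1) :
    1 ≤ ({w : V | A w u1} \ {u1, u2, u3}).ncard := by
  have h := Set.ncard_le_ncard (nbhd_subset hori u1 u2 u3) (Set.toFinite _)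
  have h2 := Set.ncard_union_le ({w : V | A w u1} \ {u1, u2, u3}) ({u2, u3} : Set V)
  rw [Set.ncard_pair h23] at h2
  have := hd1
  rw [inDeg] at this
  omega

lemma pair_distinct (hori : IsOriented A) (hfree : SFree A 3) {v u1 u2 u3 : V}
    (h12 : u1 ≠ u2) (h13 : u1 ≠ u3) (h23 : u2 ≠ u3)
    (ha1 : A u1 v) (ha2 : A u2 v) (ha3 : A u3 v)
    (hd1 : 3 ≤ inDeg A u1) (hd2 : 3 ≤ inDeg A u2) :
    ∃ a ∈ {w : V | A w u1} \ {u1, u2, u3}, ∃ b ∈ {w : V | A w u2} \ {u1, u2, u3}, a ≠ b := by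
  have hB1 : 1 ≤ ({w : V | A w u1} \ {u1, u2, u3}).ncard := B_lower hori h23 hd1
  have hB2 : 1 ≤ ({w : V | A w u2} \ {u2, u1, u3}).ncard := B_lower hori h13 hd2
  rw [triple_comm1] at hB2
  obtain ⟨a, ha⟩ := Set.nonempty_of_ncard_ne_zero (by omega : ({w : V | A w u1} \ {u1, u2, u3}).ncard ≠ 0)
  obtain ⟨b, hb⟩ := Set.nonempty_of_ncard_ne_zero (by omega : ({w : V | A w u2} \ {u1, u2, u3}).ncard ≠ 0)
  by_cases hab : a ≠ b
  · exact ⟨a, ha, b, hb, hab⟩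
  push_neg at hab
  subst hab
  by_cases h1 : ∃ a' ∈ {w : V | A w u1} \ {u1, u2, u3}, a' ≠ a
  · obtain ⟨a', ha', hne⟩ := h1
    exact ⟨a', ha', a, hb, hne⟩
  by_cases h2 : ∃ b' ∈ {w : V | A w u2} \ {u1, u2, u3}, b' ≠ a
  · obtain ⟨b', hb', hne⟩ := h2
    exact ⟨a, ha, b', hb', hne.symm⟩
  push_neg at h1 h2
  -- both B1 and B2 are {a}: derive a 2-cycle between u1 and u2
  exfalso
  have hS1 : {w : V | A w u1} ⊆ ({a, u2, u3} : Set V) := by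
    intro w hw
    rcases nbhd_subset hori u1 u2 u3 hw with h | h
    · exact Or.inl (h1 w h)
    · exact Or.inr h
  have hS2 : {w : V | A w u2} ⊆ ({a, u1, u3} : Set V) := by
    intro w hw
    have : {w : V | A w u2} ⊆ ({w : V | A w u2} \ {u2, u1, u3}) ∪ {u1, u3} :=
      nbhd_subset hori u2 u1 u3
    rcases this hw with h | h
    · rw [triple_comm1] at h
      exact Or.inl (h2 w h)
    · exact Or.inr h
  have hc1 : ({a, u2, u3} : Set V).ncard ≤ 3 := by
    refine le_trans (Set.ncard_insert_le _ _) ?_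
    have := Set.ncard_insert_le u2 ({u3} : Set V)
    simp [Set.ncard_singleton] at this ⊢
    omega
  have hc2 : ({a, u1, u3} : Set V).ncard ≤ 3 := by
    refine le_trans (Set.ncard_insert_le _ _) ?_
    have := Set.ncard_insert_le u1 ({u3} : Set V)
    simp [Set.ncard_singleton] at this ⊢
    omega
  have he1 : {w : V | A w u1} = ({a, u2, u3} : Set V) :=
    Set.eq_of_subset_of_ncard_le hS1 (le_trans hc1 hd1)
  have he2 : {w : V | A w u2} = ({a, u1, u3} : Set V) :=
    Set.eq_of_subset_of_ncard_le hS2 (le_trans hc2 hd2)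
  have hm1 : A u2 u1 := by
    have : u2 ∈ ({a, u2, u3} : Set V) := by simp
    rw [← he1] at this; exact this
  have hm2 : A u1 u2 := by
    have : u1 ∈ ({a, u1, u3} : Set V) := by simp
    rw [← he2] at this; exact this
  exact hori u1 u2 hm2 hm1

lemma B_upper (hori : IsOriented A) (hfree : SFree A 3) {v u1 u2 u3 : V}
    (h12 : u1 ≠ u2) (h13 : u1 ≠ u3) (h23 : u2 ≠ u3)
    (ha1 : A u1 v) (ha2 : A u2 v) (ha3 : A u3 v)
    (hd2 : 3 ≤ inDeg A u2) (hd3 : 3 ≤ inDeg A u3) :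
    ({w : V | A w u1} \ {u1, u2, u3}).ncard ≤ 2 := by
  by_contra hc
  push_neg at hc
  -- distinct picks in B2 and B3
  obtain ⟨b, hb, c, hc3, hbc⟩ :=
    pair_distinct hori hfree h23 h12.symm h13.symm ha2 ha3 ha1 hd2 hd3
  rw [triple_rot u1 u2 u3] at hb hc3
  -- an element of B1 avoiding b and c
  have hsub : ({w : V | A w u1} \ {u1, u2, u3}) ⊆
      (({w : V | A w u1} \ {u1, u2, u3}) \ {b, c}) ∪ {b, c} := by
    intro w hw
    by_cases h : w ∈ ({b, c} : Set V)
    · exact Or.inr h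
    · exact Or.inl ⟨hw, h⟩
  have h1 := Set.ncard_le_ncard hsub (Set.toFinite _)
  have h2 := Set.ncard_union_le (({w : V | A w u1} \ {u1, u2, u3}) \ {b, c}) ({b, c} : Set V)
  rw [Set.ncard_pair hbc] at h2
  obtain ⟨a, ha⟩ := Set.nonempty_of_ncard_ne_zero
    (by omega : ((({w : V | A w u1} \ {u1, u2, u3}) \ {b, c})).ncard ≠ 0)
  obtain ⟨ha1', hanbc⟩ := ha
  simp only [Set.mem_insert_iff, Set.mem_singleton_iff, not_or] at hanbc
  exact no_sdr hori hfree h12 h13 h23 ha1 ha2 ha3 ha1' hb hc3 hanbc.1 hanbc.2 hbc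

end Fin

section Fin2
variable [Fintype V]

lemma nbhd_subset2 (hori : IsOriented A) (u1 u2 u3 : V) :
    {w : V | A w u1} ⊆ ({w : V | A w u1} \ {u1, u2, u3}) ∪ ({w : V | A w u1} ∩ {u2, u3}) := by
  intro w hw
  by_cases hwS : w ∈ ({u1, u2, u3} : Set V)
  · rcases hwS with rfl | h
    · exact absurd hw (irrefl_of_oriented hori w)
    · exact Or.inr ⟨hw, h⟩
  · exact Or.inl ⟨hw, hwS⟩

open Classical in
lemma deg_le_B_add (hori : IsOriented A) {u1 u2 u3 : V} (h23 : u2 ≠ u3) :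
    inDeg A u1 ≤ ({w : V | A w u1} \ {u1, u2, u3}).ncard
      + ((if A u2 u1 then 1 else 0) + (if A u3 u1 then 1 else 0)) := by
  have h := Set.ncard_le_ncard (nbhd_subset2 hori u1 u2 u3) (Set.toFinite _)
  have h2 := Set.ncard_union_le ({w : V | A w u1} \ {u1, u2, u3})
    ({w : V | A w u1} ∩ {u2, u3})
  have h3 := ncard_inter_pair (N := {w : V | A w u1}) h23
  simp only [Set.mem_setOf_eq] at h3
  rw [inDeg]
  omega

lemma third_subset (hori : IsOriented A) (hfree : SFree A 3) {v u1 u2 u3 a b : V}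
    (h12 : u1 ≠ u2) (h13 : u1 ≠ u3) (h23 : u2 ≠ u3)
    (ha1 : A u1 v) (ha2 : A u2 v) (ha3 : A u3 v)
    (ha : a ∈ {w : V | A w u1} \ {u1, u2, u3})
    (hb : b ∈ {w : V | A w u2} \ {u1, u2, u3}) (hab : a ≠ b) :
    {w : V | A w u3} \ {u1, u2, u3} ⊆ {a, b} := by
  intro c hc
  by_contra hcn
  simp only [Set.mem_insert_iff, Set.mem_singleton_iff, not_or] at hcn
  exact no_sdr hori hfree h12 h13 h23 ha1 ha2 ha3 ha hb hc hab
    (Ne.symm hcn.1) (Ne.symm hcn.2)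

lemma triple_comm3 (a b c : V) : ({a, c, b} : Set V) = {a, b, c} := by
  ext x; simp only [Set.mem_insert_iff, Set.mem_singleton_iff]; tauto

open Classical in
lemma structure_lemma_s17 (hori : IsOriented A) (hfree : SFree A 3) {v u1 u2 u3 : V}
    (h12 : u1 ≠ u2) (h13 : u1 ≠ u3) (h23 : u2 ≠ u3)
    (ha1 : A u1 v) (ha2 : A u2 v) (ha3 : A u3 v)
    (hd1 : 3 ≤ inDeg A u1) (hd2 : 3 ≤ inDeg A u2) (hd3 : 3 ≤ inDeg A u3) :
    ∃ x y : V, x ≠ y ∧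
      {w : V | A w u1} \ {u1, u2, u3} = {x, y} ∧
      {w : V | A w u2} \ {u1, u2, u3} = {x, y} ∧
      {w : V | A w u3} \ {u1, u2, u3} = {x, y} ∧
      inDeg A u1 = 3 ∧ inDeg A u2 = 3 ∧ inDeg A u3 = 3 ∧
      ((A u1 u2 ∧ A u2 u3 ∧ A u3 u1) ∨ (A u2 u1 ∧ A u1 u3 ∧ A u3 u2)) := by
  -- upper bounds on the B-sets
  have hB1u : ({w : V | A w u1} \ {u1, u2, u3}).ncard ≤ 2 :=
    B_upper hori hfree h12 h13 h23 ha1 ha2 ha3 hd2 hd3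
  have hB2u : ({w : V | A w u2} \ {u1, u2, u3}).ncard ≤ 2 := by
    have := B_upper hori hfree h12.symm h23 h13 ha2 ha1 ha3 hd1 hd3
    rwa [triple_comm1] at this
  have hB3u : ({w : V | A w u3} \ {u1, u2, u3}).ncard ≤ 2 := by
    have := B_upper hori hfree h13.symm h23.symm h12 ha3 ha1 ha2 hd1 hd2
    rwa [triple_comm2] at this
  -- degree bounds
  have key1 := deg_le_B_add (u1 := u1) hori h23
  have key2 : inDeg A u2 ≤ ({w : V | A w u2} \ {u1, u2, u3}).ncard
      + ((if A u1 u2 then 1 else 0) + (if A u3 u2 then 1 else 0)) := by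
    have := deg_le_B_add (u1 := u2) (u2 := u1) (u3 := u3) hori h13
    rwa [triple_comm1] at this
  have key3 : inDeg A u3 ≤ ({w : V | A w u3} \ {u1, u2, u3}).ncard
      + ((if A u1 u3 then 1 else 0) + (if A u2 u3 then 1 else 0)) := by
    have := deg_le_B_add (u1 := u3) (u2 := u1) (u3 := u2) hori h12
    rwa [triple_comm2] at this
  -- orientation constraints
  have p12 : (if A u2 u1 then 1 else 0) + (if A u1 u2 then 1 else 0) ≤ 1 := by
    by_cases hx : A u2 u1 <;> by_cases hy : A u1 u2 <;>
      first
        | (exact absurd hy (hori _ _ hx))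
        | simp [hx, hy]
  have p13 : (if A u3 u1 then 1 else 0) + (if A u1 u3 then 1 else 0) ≤ 1 := by
    by_cases hx : A u3 u1 <;> by_cases hy : A u1 u3 <;>
      first
        | (exact absurd hy (hori _ _ hx))
        | simp [hx, hy]
  have p23 : (if A u3 u2 then 1 else 0) + (if A u2 u3 then 1 else 0) ≤ 1 := by
    by_cases hx : A u3 u2 <;> by_cases hy : A u2 u3 <;>
      first
        | (exact absurd hy (hori _ _ hx))
        | simp [hx, hy]
  -- exact counts
  have hn1 : ({w : V | A w u1} \ {u1, u2, u3}).ncard = 2 := by omega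
  have hn2 : ({w : V | A w u2} \ {u1, u2, u3}).ncard = 2 := by omega
  have hn3 : ({w : V | A w u3} \ {u1, u2, u3}).ncard = 2 := by omega
  have hD1 : inDeg A u1 = 3 := by omega
  have hD2 : inDeg A u2 = 3 := by omega
  have hD3 : inDeg A u3 = 3 := by omega
  have ht1 : (if A u2 u1 then 1 else 0) + (if A u3 u1 then 1 else 0) = 1 := by omega
  have ht2 : (if A u1 u2 then 1 else 0) + (if A u3 u2 then 1 else 0) = 1 := by omega
  have ht3 : (if A u1 u3 then 1 else 0) + (if A u2 u3 then 1 else 0) = 1 := by omega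
  -- the cyclic triangle
  have hcyc : (A u1 u2 ∧ A u2 u3 ∧ A u3 u1) ∨ (A u2 u1 ∧ A u1 u3 ∧ A u3 u2) := by
    by_cases h21 : A u2 u1
    · have h12' : ¬ A u1 u2 := hori _ _ h21
      have h31' : ¬ A u3 u1 := by
        by_cases h : A u3 u1 <;> simp [h21, h] at ht1 ⊢
      have h32 : A u3 u2 := by
        by_cases h : A u3 u2 <;> simp [h12', h] at ht2 ⊢
      have h23' : ¬ A u2 u3 := hori _ _ h32
      have h13'' : A u1 u3 := by
        by_cases h : A u1 u3 <;> simp [h23', h] at ht3 ⊢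
      exact Or.inr ⟨h21, h13'', h32⟩
    · have h31 : A u3 u1 := by
        by_cases h : A u3 u1 <;> simp [h21, h] at ht1 ⊢
      have h13' : ¬ A u1 u3 := hori _ _ h31
      have h23a : A u2 u3 := by
        by_cases h : A u2 u3 <;> simp [h13', h] at ht3 ⊢
      have h32' : ¬ A u3 u2 := hori _ _ h23a
      have h12a : A u1 u2 := by
        by_cases h : A u1 u2 <;> simp [h32', h] at ht2 ⊢
      exact Or.inl ⟨h12a, h23a, h31⟩
  -- equality of the B-sets
  have hthird12 : ∀ {a b : V}, a ∈ {w : V | A w u1} \ {u1, u2, u3} →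
      b ∈ {w : V | A w u2} \ {u1, u2, u3} → a ≠ b →
      {w : V | A w u3} \ {u1, u2, u3} ⊆ {a, b} :=
    fun ha hb hab => third_subset hori hfree h12 h13 h23 ha1 ha2 ha3 ha hb hab
  have hthird13 : ∀ {a b : V}, a ∈ {w : V | A w u1} \ {u1, u2, u3} →
      b ∈ {w : V | A w u3} \ {u1, u2, u3} → a ≠ b →
      {w : V | A w u2} \ {u1, u2, u3} ⊆ {a, b} := by
    intro a b ha hb hab
    have := third_subset (u1 := u1) (u2 := u3) (u3 := u2) hori hfree h13 h12 h23.symm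
      ha1 ha3 ha2 (by rwa [triple_comm3]) (by rwa [triple_comm3]) hab
    rwa [triple_comm3] at this
  have hBeq12 : {w : V | A w u1} \ {u1, u2, u3} = {w : V | A w u2} \ {u1, u2, u3} := by
    by_cases hsub : {w : V | A w u1} \ {u1, u2, u3} ⊆ {w : V | A w u2} \ {u1, u2, u3}
    · exact Set.eq_of_subset_of_ncard_le hsub (by omega)
    · exfalso
      obtain ⟨a, ha, hanb⟩ := Set.not_subset.mp hsub
      obtain ⟨b, b', hbb', hB2⟩ := Set.ncard_eq_two.mp hn2
      have hb : b ∈ {w : V | A w u2} \ {u1, u2, u3} := by rw [hB2]; simp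
      have hb' : b' ∈ {w : V | A w u2} \ {u1, u2, u3} := by rw [hB2]; simp
      have hab : a ≠ b := fun h => hanb (h ▸ hb)
      have hab' : a ≠ b' := fun h => hanb (h ▸ hb')
      have h3a := hthird12 ha hb hab
      have h3b := hthird12 ha hb' hab'
      have hsub1 : {w : V | A w u3} \ {u1, u2, u3} ⊆ {a} := by
        intro c hc
        rcases h3a hc with rfl | rfl
        · exact rfl
        · rcases h3b hc with rfl | h
          · exact rfl
          · exact absurd h hbb'
      have := Set.ncard_le_ncard hsub1 (Set.toFinite _)
      rw [Set.ncard_singleton] at this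
      omega
  have hBeq13 : {w : V | A w u1} \ {u1, u2, u3} = {w : V | A w u3} \ {u1, u2, u3} := by
    by_cases hsub : {w : V | A w u1} \ {u1, u2, u3} ⊆ {w : V | A w u3} \ {u1, u2, u3}
    · exact Set.eq_of_subset_of_ncard_le hsub (by omega)
    · exfalso
      obtain ⟨a, ha, hanb⟩ := Set.not_subset.mp hsub
      obtain ⟨b, b', hbb', hB3⟩ := Set.ncard_eq_two.mp hn3
      have hb : b ∈ {w : V | A w u3} \ {u1, u2, u3} := by rw [hB3]; simp
      have hb' : b' ∈ {w : V | A w u3} \ {u1, u2, u3} := by rw [hB3]; simp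
      have hab : a ≠ b := fun h => hanb (h ▸ hb)
      have hab' : a ≠ b' := fun h => hanb (h ▸ hb')
      have h3a := hthird13 ha hb hab
      have h3b := hthird13 ha hb' hab'
      have hsub1 : {w : V | A w u2} \ {u1, u2, u3} ⊆ {a} := by
        intro c hc
        rcases h3a hc with rfl | rfl
        · exact rfl
        · rcases h3b hc with rfl | h
          · exact rfl
          · exact absurd h hbb'
      have := Set.ncard_le_ncard hsub1 (Set.toFinite _)
      rw [Set.ncard_singleton] at this
      omega
  obtain ⟨x, y, hxy, hB1⟩ := Set.ncard_eq_two.mp hn1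
  exact ⟨x, y, hxy, hB1, hBeq12 ▸ hB1, hBeq13 ▸ hB1, hD1, hD2, hD3, hcyc⟩

end Fin2
section Fin3
variable [Fintype V]

lemma extract_three {s : Set V} (h : 3 ≤ s.ncard) :
    ∃ a b c, a ∈ s ∧ b ∈ s ∧ c ∈ s ∧ a ≠ b ∧ a ≠ c ∧ b ≠ c := by
  obtain ⟨a, ha⟩ := Set.nonempty_of_ncard_ne_zero (show s.ncard ≠ 0 by omega)
  have h1 : (s \ {a}).ncard = s.ncard - 1 := Set.ncard_diff_singleton_of_mem ha
  obtain ⟨b, hb⟩ := Set.nonempty_of_ncard_ne_zero (show (s \ {a}).ncard ≠ 0 by omega)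
  have h2 : ((s \ {a}) \ {b}).ncard = (s \ {a}).ncard - 1 :=
    Set.ncard_diff_singleton_of_mem hb
  obtain ⟨c, hc⟩ := Set.nonempty_of_ncard_ne_zero
    (show ((s \ {a}) \ {b}).ncard ≠ 0 by omega)
  obtain ⟨⟨hcs, hca⟩, hcb⟩ := hc
  obtain ⟨hbs, hba⟩ := hb
  simp only [Set.mem_singleton_iff] at hca hcb hba
  exact ⟨a, b, c, ha, hbs, hcs, fun h => hba h.symm, fun h => hca h.symm,
    fun h => hcb h.symm⟩

lemma extract_four {s : Set V} (h : 4 ≤ s.ncard) :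
    ∃ a b c d, a ∈ s ∧ b ∈ s ∧ c ∈ s ∧ d ∈ s ∧
      a ≠ b ∧ a ≠ c ∧ a ≠ d ∧ b ≠ c ∧ b ≠ d ∧ c ≠ d := by
  obtain ⟨a, ha⟩ := Set.nonempty_of_ncard_ne_zero (show s.ncard ≠ 0 by omega)
  have h1 : (s \ {a}).ncard = s.ncard - 1 := Set.ncard_diff_singleton_of_mem ha
  obtain ⟨b, c, d, hb, hc, hd, hbc, hbd, hcd⟩ :=
    extract_three (s := s \ {a}) (by omega)
  obtain ⟨hbs, hba⟩ := hb
  obtain ⟨hcs, hca⟩ := hc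
  obtain ⟨hds, hda⟩ := hd
  simp only [Set.mem_singleton_iff] at hba hca hda
  exact ⟨a, b, c, d, ha, hbs, hcs, hds, fun h => hba h.symm, fun h => hca h.symm,
    fun h => hda h.symm, hbc, hbd, hcd⟩

/-- exactly one of `A u2 u1`, `A u3 u1` holds. -/
lemma exactly_one (hori : IsOriented A) (hfree : SFree A 3) {v u1 u2 u3 : V}
    (h12 : u1 ≠ u2) (h13 : u1 ≠ u3) (h23 : u2 ≠ u3)
    (ha1 : A u1 v) (ha2 : A u2 v) (ha3 : A u3 v)
    (hd1 : 3 ≤ inDeg A u1) (hd2 : 3 ≤ inDeg A u2) (hd3 : 3 ≤ inDeg A u3) :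
    (A u2 u1 ∧ ¬ A u3 u1) ∨ (¬ A u2 u1 ∧ A u3 u1) := by
  obtain ⟨x, y, hxy, hB1, hB2, hB3, hD1, hD2, hD3, hcyc⟩ :=
    structure_lemma_s17 hori hfree h12 h13 h23 ha1 ha2 ha3 hd1 hd2 hd3
  rcases hcyc with ⟨c1, c2, c3⟩ | ⟨c1, c2, c3⟩
  · exact Or.inr ⟨hori _ _ c1, c3⟩
  · exact Or.inl ⟨c1, hori _ _ c2⟩

/-- No vertex has four in-neighbours of in-degree at least 3. -/
lemma no_four (hori : IsOriented A) (hfree : SFree A 3) {v u1 u2 u3 u4 : V}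
    (h12 : u1 ≠ u2) (h13 : u1 ≠ u3) (h14 : u1 ≠ u4)
    (h23 : u2 ≠ u3) (h24 : u2 ≠ u4) (h34 : u3 ≠ u4)
    (ha1 : A u1 v) (ha2 : A u2 v) (ha3 : A u3 v) (ha4 : A u4 v)
    (hd1 : 3 ≤ inDeg A u1) (hd2 : 3 ≤ inDeg A u2)
    (hd3 : 3 ≤ inDeg A u3) (hd4 : 3 ≤ inDeg A u4) : False := by
  have e1 := exactly_one hori hfree h12 h13 h23 ha1 ha2 ha3 hd1 hd2 hd3
  have e2 := exactly_one hori hfree h12 h14 h24 ha1 ha2 ha4 hd1 hd2 hd4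
  have e3 := exactly_one hori hfree h13 h14 h34 ha1 ha3 ha4 hd1 hd3 hd4
  tauto

/-- every vertex has at most three in-neighbours of in-degree at least 3. -/
lemma at_most_three (hori : IsOriented A) (hfree : SFree A 3) (v : V) :
    ({u : V | A u v ∧ 3 ≤ inDeg A u}).ncard ≤ 3 := by
  by_contra hc
  push_neg at hc
  obtain ⟨a, b, c, d, ha, hb, hc', hd, hab, hac, had, hbc, hbd, hcd⟩ :=
    extract_four (s := {u : V | A u v ∧ 3 ≤ inDeg A u}) (by omega)
  exact no_four hori hfree hab hac had hbc hbd hcd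
    ha.1 hb.1 hc'.1 hd.1 ha.2 hb.2 hc'.2 hd.2

/-- building a copy from the bad configuration and one extra in-neighbour. -/
lemma subC3 (hori : IsOriented A) (hfree : SFree A 3) {v p q z x y r w : V}
    (hpq : p ≠ q) (hpz : p ≠ z) (hqz : q ≠ z)
    (hap : A p v) (haq : A q v) (haz : A z v)
    (hxp : A x p) (hyp : A y p) (hxq : A x q) (hyq : A y q) (hrp : A r p)
    (hxy : x ≠ y) (hrx : r ≠ x) (hry : r ≠ y) (hzx : z ≠ x) (hzy : z ≠ y)
    (hrp' : r ≠ p) (hrq : r ≠ q) (hrz : r ≠ z)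
    (hw : A w z) (hwp : w ≠ p) (hwq : w ≠ q) : False := by
  have hxirr : ∀ a b : V, A a b → a ≠ b := fun a b h he =>
    irrefl_of_oriented hori b (he ▸ h)
  have hwz : w ≠ z := hxirr _ _ hw
  have hxp' : x ≠ p := hxirr _ _ hxp
  have hxq' : x ≠ q := hxirr _ _ hxq
  have hyp' : y ≠ p := hxirr _ _ hyp
  have hyq' : y ≠ q := hxirr _ _ hyq
  have hxz : x ≠ z := hzx.symm
  have hyz : y ≠ z := hzy.symm
  apply hfree v
  by_cases hwx : w = x
  · subst hwx
    refine copy_builder hori hpq hpz hqz hry hrx hxy.symm ?_ hap haq haz hrp hyq hw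
    intro t ht u' hu'
    simp only [List.mem_cons, List.not_mem_nil, or_false] at ht hu'
    rcases ht with rfl | rfl | rfl <;> rcases hu' with rfl | rfl | rfl <;> assumption
  by_cases hwy : w = y
  · subst hwy
    refine copy_builder hori hpq hpz hqz hrx hry hxy ?_ hap haq haz hrp hxq hw
    intro t ht u' hu'
    simp only [List.mem_cons, List.not_mem_nil, or_false] at ht hu'
    rcases ht with rfl | rfl | rfl <;> rcases hu' with rfl | rfl | rfl <;> assumption
  by_cases hwr : w = r
  · subst hwr
    refine copy_builder hori hpq hpz hqz hxy.symm (fun h => hwy h.symm) (fun h => hwx h.symm)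
      ?_ hap haq haz hyp hxq hw
    intro t ht u' hu'
    simp only [List.mem_cons, List.not_mem_nil, or_false] at ht hu'
    rcases ht with rfl | rfl | rfl <;> rcases hu' with rfl | rfl | rfl <;> assumption
  · refine copy_builder hori hpq hpz hqz hrx (fun h => hwr h.symm) (fun h => hwx h.symm)
      ?_ hap haq haz hrp hxq hw
    intro t ht u' hu'
    simp only [List.mem_cons, List.not_mem_nil, or_false] at ht hu'
    rcases ht with rfl | rfl | rfl <;> rcases hu' with rfl | rfl | rfl <;> assumption

/-- in the bad configuration, every other in-neighbour of `v` has in-degree 0. -/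
lemma badZ (hori : IsOriented A) (hfree : SFree A 3) {v u1 u2 u3 x y z : V}
    (h12 : u1 ≠ u2) (h13 : u1 ≠ u3) (h23 : u2 ≠ u3)
    (ha1 : A u1 v) (ha2 : A u2 v) (ha3 : A u3 v) (hxy : x ≠ y)
    (hB1 : {w : V | A w u1} \ {u1, u2, u3} = {x, y})
    (hB2 : {w : V | A w u2} \ {u1, u2, u3} = {x, y})
    (hB3 : {w : V | A w u3} \ {u1, u2, u3} = {x, y})
    (hcyc : (A u1 u2 ∧ A u2 u3 ∧ A u3 u1) ∨ (A u2 u1 ∧ A u1 u3 ∧ A u3 u2))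
    (hz : A z v) (hz1 : z ≠ u1) (hz2 : z ≠ u2) (hz3 : z ≠ u3)
    (hzx : z ≠ x) (hzy : z ≠ y) :
    inDeg A z = 0 := by
  have hxmem1 : x ∈ {w : V | A w u1} \ {u1, u2, u3} := by rw [hB1]; simp
  have hymem1 : y ∈ {w : V | A w u1} \ {u1, u2, u3} := by rw [hB1]; simp
  have hxmem2 : x ∈ {w : V | A w u2} \ {u1, u2, u3} := by rw [hB2]; simp
  have hymem2 : y ∈ {w : V | A w u2} \ {u1, u2, u3} := by rw [hB2]; simp
  have hxmem3 : x ∈ {w : V | A w u3} \ {u1, u2, u3} := by rw [hB3]; simp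
  have hymem3 : y ∈ {w : V | A w u3} \ {u1, u2, u3} := by rw [hB3]; simp
  have hx1 : A x u1 := hxmem1.1
  have hy1 : A y u1 := hymem1.1
  have hx2 : A x u2 := hxmem2.1
  have hy2 : A y u2 := hymem2.1
  have hx3 : A x u3 := hxmem3.1
  have hy3 : A y u3 := hymem3.1
  have hxn : x ∉ ({u1, u2, u3} : Set V) := hxmem1.2
  have hyn : y ∉ ({u1, u2, u3} : Set V) := hymem1.2
  simp only [Set.mem_insert_iff, Set.mem_singleton_iff, not_or] at hxn hyn
  rw [inDeg, ← Set.ncard_empty V]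
  congr 1
  rw [Set.eq_empty_iff_forall_notMem]
  intro w hw
  have hw' : A w z := hw
  rcases hcyc with ⟨c1, c2, c3⟩ | ⟨c1, c2, c3⟩
  · -- u1 → u2 → u3 → u1
    have r12 : w = u1 ∨ w = u2 := by
      by_contra hcn
      push_neg at hcn
      exact subC3 hori hfree h12 hz1.symm hz2.symm ha1 ha2 hz hx1 hy1 hx2 hy2 c3
        hxy (fun h => hxn.2.2 h.symm) (fun h => hyn.2.2 h.symm) hzx hzy
        h13.symm h23.symm hz3.symm hw' hcn.1 hcn.2
    have r23 : w = u2 ∨ w = u3 := by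
      by_contra hcn
      push_neg at hcn
      exact subC3 hori hfree h23 hz2.symm hz3.symm ha2 ha3 hz hx2 hy2 hx3 hy3 c1
        hxy (fun h => hxn.1 h.symm) (fun h => hyn.1 h.symm) hzx hzy
        h12 h13 hz1.symm hw' hcn.1 hcn.2
    have r31 : w = u3 ∨ w = u1 := by
      by_contra hcn
      push_neg at hcn
      exact subC3 hori hfree h13.symm hz3.symm hz1.symm ha3 ha1 hz hx3 hy3 hx1 hy1 c2
        hxy (fun h => hxn.2.1 h.symm) (fun h => hyn.2.1 h.symm) hzx hzy
        h23 h12.symm hz2.symm hw' hcn.1 hcn.2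
    rcases r12 with rfl | rfl
    · rcases r23 with h | h
      · exact h12 h
      · exact h13 h
    · rcases r31 with h | h
      · exact h23 h
      · exact h12 h.symm
  · -- u2 → u1, u1 → u3, u3 → u2
    have r21 : w = u2 ∨ w = u1 := by
      by_contra hcn
      push_neg at hcn
      exact subC3 hori hfree h12.symm hz2.symm hz1.symm ha2 ha1 hz hx2 hy2 hx1 hy1 c3
        hxy (fun h => hxn.2.2 h.symm) (fun h => hyn.2.2 h.symm) hzx hzy
        h23.symm h13.symm hz3.symm hw' hcn.1 hcn.2
    have r13 : w = u1 ∨ w = u3 := by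
      by_contra hcn
      push_neg at hcn
      exact subC3 hori hfree h13 hz1.symm hz3.symm ha1 ha3 hz hx1 hy1 hx3 hy3 c1
        hxy (fun h => hxn.2.1 h.symm) (fun h => hyn.2.1 h.symm) hzx hzy
        h12.symm h23 hz2.symm hw' hcn.1 hcn.2
    have r32 : w = u3 ∨ w = u2 := by
      by_contra hcn
      push_neg at hcn
      exact subC3 hori hfree h23.symm hz3.symm hz2.symm ha3 ha2 hz hx3 hy3 hx2 hy2 c2
        hxy (fun h => hxn.1 h.symm) (fun h => hyn.1 h.symm) hzx hzy
        h13 h12 hz1.symm hw' hcn.1 hcn.2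
    rcases r21 with rfl | rfl
    · rcases r13 with h | h
      · exact h12 h.symm
      · exact h23 h
    · rcases r32 with h | h
      · exact h13 h
      · exact h12 h
end Fin3
end Machinery


lemma numeric_main {a s m zc n : ℤ}
    (hA : a ≤ (s - zc) * 2 + ((5 + zc) + 9) + (m - 4) * (s + 3))
    (hn : n = s + m) (hm4 : 4 ≤ m) (hzc : 0 ≤ zc) (hs0 : 0 ≤ s) (hn40 : 40 ≤ n)
    (harc : (n + 2) ^ 2 ≤ 4 * a + 3) : False := by
  rcases le_or_gt 6 s with hs6 | hs6
  · nlinarith [sq_nonneg (m - s - 4)]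
  · nlinarith [sq_nonneg (m - s - 30)]

lemma numeric_b {s m n aa : ℤ} (h1 : aa ≤ 2 * s + m * (s + 2))
    (h2 : (n + 2) ^ 2 ≤ 4 * aa + 3) (hn : n = s + m) : (n - 2 * s) ^ 2 ≤ 4 * n - 1 := by
  subst hn
  ring_nf
  ring_nf at h2
  linarith


set_option maxHeartbeats 1000000 in
/-- Claim 3.1: if `n ≥ 40` and `D` is an `S_{3,1}`-free oriented
graph on `n` vertices with at least `⌊(n+2)²/4⌋` arcs, then (a) every vertex has
at most two in-neighbours of in-degree ≥ 3, and (b) the set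
`X = {v : d⁻(v) ≤ 2}` satisfies `n/2 - √n < |X| < n/2 + √n`. -/
theorem claim_S31 {V : Type*} [Fintype V] (A : V → V → Prop)
    (n : ℕ) (hn : 40 ≤ n) (hcard : Fintype.card V = n)
    (hori : IsOriented A) (hfree : SFree A 3)
    (harcs : (n + 2) ^ 2 / 4 ≤ arcCount A) :
    (∀ v : V, {u : V | A u v ∧ 3 ≤ inDeg A u}.ncard ≤ 2) ∧
    ((n : ℝ) / 2 - Real.sqrt (n : ℝ)
        < ({v : V | inDeg A v ≤ 2}.ncard : ℝ) ∧
      ({v : V | inDeg A v ≤ 2}.ncard : ℝ)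
        < (n : ℝ) / 2 + Real.sqrt (n : ℝ)) := by
  classical
  have hxirr : ∀ a b : V, A a b → a ≠ b := fun a b h he =>
    irrefl_of_oriented hori b (he ▸ h)
  set X : Finset V := Finset.univ.filter (fun v => inDeg A v ≤ 2) with hXdef
  set Y : Finset V := Finset.univ.filter (fun v => ¬ inDeg A v ≤ 2) with hYdef
  have hpart : X.card + Y.card = n := by
    rw [hXdef, hYdef, Finset.card_filter_add_card_filter_not, Finset.card_univ, hcard]
  have hsum : arcCount A = ∑ v ∈ X, inDeg A v + ∑ v ∈ Y, inDeg A v := by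
    rw [arcCount_eq_sum A, hXdef, hYdef, Finset.sum_filter_add_sum_filter_not]
  have harc4 : (n + 2) ^ 2 ≤ 4 * arcCount A + 3 := by
    have h1 := Nat.div_add_mod ((n + 2) ^ 2) 4
    have h2 : (n + 2) ^ 2 % 4 < 4 := Nat.mod_lt _ (by norm_num)
    omega
  have hXsum : ∑ v ∈ X, inDeg A v ≤ 2 * X.card := by
    have h := Finset.sum_le_card_nsmul X (fun v => inDeg A v) 2 ?_
    · simpa [smul_eq_mul, mul_comm] using h
    · intro x hx
      rw [hXdef] at hx
      exact (Finset.mem_filter.mp hx).2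
  have hdegY : ∀ v : V, inDeg A v ≤ X.card + ({u : V | A u v ∧ 3 ≤ inDeg A u}).ncard := by
    intro v
    have hsub : {u : V | A u v} ⊆
        {u : V | A u v ∧ inDeg A u ≤ 2} ∪ {u : V | A u v ∧ 3 ≤ inDeg A u} := by
      intro u hu
      by_cases h : inDeg A u ≤ 2
      · exact Or.inl ⟨hu, h⟩
      · exact Or.inr ⟨hu, by omega⟩
    have h1 := Set.ncard_le_ncard hsub (Set.toFinite _)
    have h2 := Set.ncard_union_le {u : V | A u v ∧ inDeg A u ≤ 2}
      {u : V | A u v ∧ 3 ≤ inDeg A u}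
    have h3 : {u : V | A u v ∧ inDeg A u ≤ 2}.ncard ≤ X.card := by
      rw [hXdef, ← ncard_setOf_eq_card_filter]
      exact Set.ncard_le_ncard (fun u hu => hu.2) (Set.toFinite _)
    rw [inDeg]
    omega
  have hdeg3 : ∀ v : V, inDeg A v ≤ X.card + 3 := by
    intro v
    have := at_most_three hori hfree v
    have := hdegY v
    omega
  -- Part (a)
  have parta : ∀ v : V, ({u : V | A u v ∧ 3 ≤ inDeg A u}).ncard ≤ 2 := by
    by_contra hcon
    push_neg at hcon
    obtain ⟨v₀, hv₀⟩ := hcon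
    obtain ⟨u1, u2, u3, hu1, hu2, hu3, h12, h13, h23⟩ :=
      extract_three (s := {u : V | A u v₀ ∧ 3 ≤ inDeg A u}) (by omega)
    obtain ⟨x, y, hxy, hB1, hB2, hB3, hD1, hD2, hD3, hcyc⟩ :=
      structure_lemma_s17 hori hfree h12 h13 h23 hu1.1 hu2.1 hu3.1 hu1.2 hu2.2 hu3.2
    have hv1 : v₀ ≠ u1 := (hxirr _ _ hu1.1).symm
    have hv2 : v₀ ≠ u2 := (hxirr _ _ hu2.1).symm
    have hv3 : v₀ ≠ u3 := (hxirr _ _ hu3.1).symm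
    set Z : Finset V := Finset.univ.filter (fun z => inDeg A z = 0) with hZdef
    have hZX : Z ⊆ X := by
      intro z hz
      rw [hZdef] at hz
      rw [hXdef]
      simp only [Finset.mem_filter, Finset.mem_univ, true_and] at hz ⊢
      omega
    have hZ0 : ∑ v ∈ Z, inDeg A v = 0 := by
      refine Finset.sum_eq_zero ?_
      intro z hz
      rw [hZdef] at hz
      exact (Finset.mem_filter.mp hz).2
    -- the in-neighbourhood of v₀
    have hNv : {u : V | A u v₀} ⊆ ({u1, u2, u3, x, y} : Set V) ∪ ↑Z := by
      intro z hz
      by_cases hz1 : z = u1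
      · exact Or.inl (by simp [hz1])
      by_cases hz2 : z = u2
      · exact Or.inl (by simp [hz2])
      by_cases hz3 : z = u3
      · exact Or.inl (by simp [hz3])
      by_cases hzx : z = x
      · exact Or.inl (by simp [hzx])
      by_cases hzy : z = y
      · exact Or.inl (by simp [hzy])
      · refine Or.inr ?_
        have h0 := badZ hori hfree h12 h13 h23 hu1.1 hu2.1 hu3.1 hxy hB1 hB2 hB3 hcyc
          hz hz1 hz2 hz3 hzx hzy
        rw [hZdef]
        simp only [Finset.coe_filter, Finset.mem_univ, true_and, Set.mem_setOf_eq]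
        exact h0
    have hdv : inDeg A v₀ ≤ 5 + Z.card := by
      have h1 := Set.ncard_le_ncard hNv (Set.toFinite _)
      have h2 := Set.ncard_union_le ({u1, u2, u3, x, y} : Set V) (↑Z : Set V)
      have h3 : ({u1, u2, u3, x, y} : Set V).ncard ≤ 5 := by
        refine le_trans (Set.ncard_insert_le _ _) ?_
        refine le_trans (Nat.add_le_add_right (Set.ncard_insert_le _ _) 1) ?_
        refine le_trans (Nat.add_le_add_right (Nat.add_le_add_right (Set.ncard_insert_le _ _) 1) 1) ?_
        refine le_trans (Nat.add_le_add_right (Nat.add_le_add_right (Nat.add_le_add_right (Set.ncard_insert_le _ _) 1) 1) 1) ?_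
        simp [Set.ncard_singleton]
      have h4 : (↑Z : Set V).ncard = Z.card := Set.ncard_coe_finset Z
      rw [inDeg]
      omega
    -- v₀ and the u's are in Y
    have hdv3 : 3 ≤ inDeg A v₀ := by
      have hsub : ({u1, u2, u3} : Set V) ⊆ {u : V | A u v₀} := by
        intro t ht
        rcases ht with rfl | rfl | rfl
        · exact hu1.1
        · exact hu2.1
        · exact hu3.1
      have h1 := Set.ncard_le_ncard hsub (Set.toFinite _)
      have h2 : ({u1, u2, u3} : Set V).ncard = 3 :=
        Set.ncard_eq_three.mpr ⟨u1, u2, u3, h12, h13, h23, rfl⟩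
      rw [inDeg]
      omega
    have hYmem : ∀ t : V, 3 ≤ inDeg A t → t ∈ Y := by
      intro t ht
      rw [hYdef]
      simp only [Finset.mem_filter, Finset.mem_univ, true_and]
      omega
    set T : Finset V := {v₀, u1, u2, u3} with hTdef
    have hTY : T ⊆ Y := by
      intro t ht
      rw [hTdef] at ht
      simp only [Finset.mem_insert, Finset.mem_singleton] at ht
      rcases ht with rfl | rfl | rfl | rfl
      · exact hYmem _ hdv3
      · exact hYmem _ (by omega)
      · exact hYmem _ (by omega)
      · exact hYmem _ (by omega)
    have hvnot : v₀ ∉ ({u1, u2, u3} : Finset V) := by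
      simp only [Finset.mem_insert, Finset.mem_singleton]
      push_neg
      exact ⟨hv1, hv2, hv3⟩
    have hu1not : u1 ∉ ({u2, u3} : Finset V) := by
      simp only [Finset.mem_insert, Finset.mem_singleton]
      push_neg
      exact ⟨h12, h13⟩
    have hu2not : u2 ∉ ({u3} : Finset V) := by simpa using h23
    have hTcard : T.card = 4 := by
      rw [hTdef, Finset.card_insert_of_notMem hvnot,
        Finset.card_insert_of_notMem hu1not, Finset.card_insert_of_notMem hu2not,
        Finset.card_singleton]
    have hsumT : ∑ v ∈ T, inDeg A v = inDeg A v₀ + 9 := by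
      rw [hTdef, Finset.sum_insert hvnot, Finset.sum_insert hu1not,
        Finset.sum_insert hu2not, Finset.sum_singleton, hD1, hD2, hD3]
      omega
    have hYsplit : ∑ v ∈ Y \ T, inDeg A v + ∑ v ∈ T, inDeg A v = ∑ v ∈ Y, inDeg A v :=
      Finset.sum_sdiff hTY
    have hYTsum : ∑ v ∈ Y \ T, inDeg A v ≤ (Y \ T).card * (X.card + 3) := by
      have h := Finset.sum_le_card_nsmul (Y \ T) (fun v => inDeg A v) (X.card + 3)
        fun t _ => hdeg3 t
      simpa [smul_eq_mul] using h
    have hXsplit : ∑ v ∈ X \ Z, inDeg A v + ∑ v ∈ Z, inDeg A v = ∑ v ∈ X, inDeg A v :=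
      Finset.sum_sdiff hZX
    have hXZsum : ∑ v ∈ X \ Z, inDeg A v ≤ (X \ Z).card * 2 := by
      have h := Finset.sum_le_card_nsmul (X \ Z) (fun v => inDeg A v) 2 ?_
      · simpa [smul_eq_mul] using h
      · intro t ht
        have htX : t ∈ X := (Finset.mem_sdiff.mp ht).1
        rw [hXdef] at htX
        exact (Finset.mem_filter.mp htX).2
    have hcZ : (X \ Z).card + Z.card = X.card := Finset.card_sdiff_add_card_eq_card hZX
    have hcT : (Y \ T).card + T.card = Y.card := Finset.card_sdiff_add_card_eq_card hTY
    -- the numeric contradiction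
    have hm4 : 4 ≤ Y.card := by
      have := Finset.card_le_card hTY
      omega
    -- cast to integers
    set a := arcCount A
    set s := X.card
    set m := Y.card
    set zc := Z.card
    have hA : a ≤ (X \ Z).card * 2 + (inDeg A v₀ + 9) + (Y \ T).card * (s + 3) := by
      linarith [hsum, hXsplit, hXZsum, hYsplit, hYTsum, hsumT, hZ0]
    have hsz : ((X \ Z).card : ℤ) = (s : ℤ) - zc := by
      have := hcZ
      push_cast [← this]
      ring
    have hmt : ((Y \ T).card : ℤ) = (m : ℤ) - 4 := by
      have := hcT
      rw [hTcard] at this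
      push_cast [← this]
      ring
    have hAz : (a : ℤ) ≤ (((s : ℤ)) - zc) * 2 + ((5 + zc) + 9) + ((m : ℤ) - 4) * ((s : ℤ) + 3) := by
      have h5 : (inDeg A v₀ : ℤ) ≤ 5 + (zc : ℤ) := by exact_mod_cast hdv
      have hAz' : (a : ℤ) ≤ ((X \ Z).card : ℤ) * 2 + ((inDeg A v₀ : ℤ) + 9)
          + ((Y \ T).card : ℤ) * ((s : ℤ) + 3) := by exact_mod_cast hA
      rw [hsz, hmt] at hAz'
      linarith
    have hnz : (n : ℤ) = (s : ℤ) + m := by exact_mod_cast hpart.symm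
    have hm4z : (4 : ℤ) ≤ m := by exact_mod_cast hm4
    have hzc0 : (0 : ℤ) ≤ zc := Int.ofNat_nonneg zc
    have hs0 : (0 : ℤ) ≤ s := Int.ofNat_nonneg s
    have hn40 : (40 : ℤ) ≤ n := by exact_mod_cast hn
    have harc4z : (((n : ℤ)) + 2) ^ 2 ≤ 4 * (a : ℤ) + 3 := by exact_mod_cast harc4
    exact numeric_main hAz hnz hm4z hzc0 hs0 hn40 harc4z
  refine ⟨parta, ?_⟩
  -- Part (b)
  have hdeg2 : ∀ v : V, inDeg A v ≤ X.card + 2 := by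
    intro v
    have := hdegY v
    have := parta v
    omega
  have hYsum2 : ∑ v ∈ Y, inDeg A v ≤ Y.card * (X.card + 2) := by
    have h := Finset.sum_le_card_nsmul Y (fun v => inDeg A v) (X.card + 2)
      fun t _ => hdeg2 t
    simpa [smul_eq_mul] using h
  have hkey : ((n : ℤ) - 2 * X.card) ^ 2 ≤ 4 * n - 1 := by
    have h1 : arcCount A ≤ 2 * X.card + Y.card * (X.card + 2) := by
      linarith [hsum, hXsum, hYsum2]
    have h1z : (arcCount A : ℤ) ≤ 2 * (X.card : ℤ) + (Y.card : ℤ) * ((X.card : ℤ) + 2) := by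
      exact_mod_cast h1
    have h2z : (((n : ℤ)) + 2) ^ 2 ≤ 4 * (arcCount A : ℤ) + 3 := by exact_mod_cast harc4
    have hnz : (n : ℤ) = (X.card : ℤ) + (Y.card : ℤ) := by exact_mod_cast hpart.symm
    exact numeric_b h1z h2z hnz
  have hset : ({v : V | inDeg A v ≤ 2}).ncard = X.card := by
    rw [hXdef, ← ncard_setOf_eq_card_filter]
  rw [hset]
  -- real arithmetic
  have hn0 : (0 : ℝ) ≤ (n : ℝ) := Nat.cast_nonneg n
  have hsq : ((n : ℝ) - 2 * X.card) ^ 2 < (2 * Real.sqrt n) ^ 2 := by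
    have h1 : (((n : ℤ) - 2 * X.card : ℤ) : ℝ) ^ 2 ≤ 4 * (n : ℝ) - 1 := by
      exact_mod_cast hkey
    have h2 : (2 * Real.sqrt n) ^ 2 = 4 * (n : ℝ) := by
      rw [mul_pow, Real.sq_sqrt hn0]
      ring
    push_cast at h1
    rw [h2]
    linarith
  have habs : |(n : ℝ) - 2 * X.card| < 2 * Real.sqrt n := by
    have h0 : (0 : ℝ) ≤ 2 * Real.sqrt n := by positivity
    exact abs_lt_of_sq_lt_sq hsq h0
  rw [abs_lt] at habs
  constructor
  · nlinarith [habs.1, habs.2]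
  · nlinarith [habs.1, habs.2]
end

section
/- Let k ≥ 4 be an integer and let D be an S_{k,1}-free oriented graph. Then every vertex v of D with in-degree d⁻(v) ≥ k has fewer than k in-neighbors u with d⁻(u) ≥ 2k−1. -/
open scoped Classical in
/-- The in-degree expressed as a `Finset` cardinality. -/
lemma inDeg_eq_card {V : Type*} [Fintype V] (A : V → V → Prop) (v : V) :
    inDeg A v = (Finset.univ.filter (fun y => A y v)).card := by
  rw [inDeg, Set.ncard_eq_toFinset_card', Set.toFinset_setOf]

/-- Greedy extension: given `k` in-neighbours `u i` of `v`, each of in-degree at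
least `2k-1`, we can choose, for any `m ≤ k`, distinct vertices `w i` with
`A (w i) (u i)` avoiding all the `u j`. -/
lemma extend_w {V : Type*} [Fintype V] (A : V → V → Prop) (k : ℕ) (hk : 4 ≤ k)
    (hori : IsOriented A) (v : V) (u : Fin k → V) (hu : Function.Injective u)
    (hdeg : ∀ i, 2 * k - 1 ≤ inDeg A (u i)) (_harc : ∀ i, A (u i) v) :
    ∀ m (hm : m ≤ k), ∃ w : Fin m → V, Function.Injective w ∧
      (∀ i, A (w i) (u (Fin.castLE hm i))) ∧ (∀ i j, w i ≠ u j) := by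
  classical
  intro m
  induction m with
  | zero => exact fun _ => ⟨Fin.elim0, fun i => i.elim0, fun i => i.elim0, fun i => i.elim0⟩
  | succ m ih =>
    intro hm
    obtain ⟨w, hwinj, hwarc, hwu⟩ := ih (Nat.le_of_succ_le hm)
    set i₀ : Fin k := ⟨m, hm⟩ with hi₀
    set N : Finset V := Finset.univ.filter (fun y => A y (u i₀)) with hN
    set F : Finset V := (Finset.image u Finset.univ).erase (u i₀) ∪ Finset.image w Finset.univ
      with hF
    have hNcard : 2 * k - 1 ≤ N.card := by
      rw [hN, ← inDeg_eq_card]; exact hdeg i₀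
    have hFcard : F.card ≤ (k - 1) + m := by
      refine le_trans (Finset.card_union_le _ _) (Nat.add_le_add ?_ ?_)
      · rw [Finset.card_erase_of_mem (Finset.mem_image_of_mem u (Finset.mem_univ i₀)),
          Finset.card_image_of_injective _ hu, Finset.card_univ, Fintype.card_fin]
      · exact le_trans (Finset.card_image_le) (by simp)
    have hlt : F.card < N.card := by
      refine lt_of_le_of_lt hFcard (lt_of_lt_of_le ?_ hNcard)
      omega
    have hne : (N \ F).Nonempty := by
      rw [← Finset.card_pos]
      have := Finset.le_card_sdiff F N
      omega
    obtain ⟨x, hx⟩ := hne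
    rw [Finset.mem_sdiff] at hx
    obtain ⟨hxN, hxF⟩ := hx
    have hxA : A x (u i₀) := by
      rw [hN, Finset.mem_filter] at hxN; exact hxN.2
    have hxnu : ∀ j, x ≠ u j := by
      intro j hxe
      by_cases hji : j = i₀
      · subst hji; rw [hxe] at hxA; exact hori _ _ hxA hxA
      · apply hxF
        rw [hF]
        apply Finset.mem_union_left
        exact Finset.mem_erase.2 ⟨hxe ▸ fun h => hji (hu (hxe ▸ h)), by
          rw [hxe]; exact Finset.mem_image_of_mem u (Finset.mem_univ j)⟩
    have hxnw : ∀ i, x ≠ w i := by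
      intro i hxe
      exact hxF (Finset.mem_union_right _ (hxe ▸ Finset.mem_image_of_mem w (Finset.mem_univ i)))
    refine ⟨Fin.snoc w x, ?_, ?_, ?_⟩
    · intro a b hab
      induction a using Fin.lastCases with
      | last =>
        induction b using Fin.lastCases with
        | last => rfl
        | cast b =>
          rw [Fin.snoc_last, Fin.snoc_castSucc] at hab
          exact absurd hab (hxnw b)
      | cast a =>
        induction b using Fin.lastCases with
        | last =>
          rw [Fin.snoc_last, Fin.snoc_castSucc] at hab
          exact absurd hab.symm (hxnw a)
        | cast b =>
          rw [Fin.snoc_castSucc, Fin.snoc_castSucc] at hab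
          exact congrArg Fin.castSucc (hwinj hab)
    · intro i
      induction i using Fin.lastCases with
      | last =>
        rw [Fin.snoc_last]
        exact hxA
      | cast i =>
        rw [Fin.snoc_castSucc]
        exact hwarc i
    · intro i j
      induction i using Fin.lastCases with
      | last => rw [Fin.snoc_last]; exact hxnu j
      | cast i => rw [Fin.snoc_castSucc]; exact hwu i j

/-- for `k ≥ 4`, in an `S_{k,1}`-free oriented graph every vertex
`v` with `d⁻(v) ≥ k` has fewer than `k` in-neighbours `u` with
`d⁻(u) ≥ 2k - 1`. -/
theorem few_big_inNbrs {V : Type*} [Fintype V] (A : V → V → Prop)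
    (k : ℕ) (hk : 4 ≤ k) (hori : IsOriented A) (hfree : SFree A k) :
    ∀ v : V, k ≤ inDeg A v →
      {u : V | A u v ∧ 2 * k - 1 ≤ inDeg A u}.ncard < k := by
  classical
  intro v _
  by_contra hle
  push_neg at hle
  set S := {u : V | A u v ∧ 2 * k - 1 ≤ inDeg A u} with hS
  have hScard : k ≤ S.toFinset.card := by rwa [← Set.ncard_eq_toFinset_card']
  obtain ⟨t, hts, htc⟩ := Finset.exists_subset_card_eq hScard
  have e := t.equivFinOfCardEq htc
  set u : Fin k → V := fun i => ((e.symm i : t) : V) with hudef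
  have hu : Function.Injective u := fun a b h => e.symm.injective (Subtype.ext h)
  have hmem : ∀ i, u i ∈ S := fun i => Set.mem_toFinset.1 (hts (e.symm i).2)
  have harc : ∀ i, A (u i) v := fun i => (hmem i).1
  have hdeg : ∀ i, 2 * k - 1 ≤ inDeg A (u i) := fun i => (hmem i).2
  obtain ⟨w, hwinj, hwarc, hwu⟩ := extend_w A k hk hori v u hu hdeg harc k le_rfl
  apply hfree v
  exact ⟨u, w, hu, hwinj, fun i j => (hwu j i).symm,
    fun i h => hori v v (h ▸ harc i) (h ▸ harc i),
    fun i h => hori _ _ (harc (Fin.castLE le_rfl i)) (h ▸ hwarc i),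
    fun i => hwarc i, harc⟩
end
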